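/- arXiv:0910.2357 — 7 statements merged into one kernel-verified Lean document; each statement's English description precedes it below -/
import Mathlib

section
/- Let φ be a nilpotent endomorphism of a finite-dimensional vector space V over a field K. Then V admits a basis of the form {φ^i(x_γ) : γ ∈ Γ, 0 ≤ i ≤ k_γ - 1} for finitely many vectors x_γ and positive integers k_γ with φ^{k_γ}(x_γ) = 0 for each γ (a nilpotent Jordan normal base). -/
/-!
Through `Module.AEval'`, `φ` turns `V` into a finitely generated `K[X]`-module on which `X`
acts nilpotently, i.e. a torsion module for the prime `X` of the principal ideal domain `K[X]`.
By the structure theorem it is a direct sum of cyclic modules `K[X] ⧸ (X ^ k)`; the monomials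
`1, X, …, X ^ (k - 1)` form a `K`-basis of each summand, and multiplication by `X` is `φ`, so
the image of the generator `1` of a summand is the head `x` of a Jordan chain
`x, φ x, …, φ ^ (k - 1) x`. Summands with `k = 0` are zero and are discarded.
-/

open Polynomial Module
open scoped DirectSum

section QuotientBasis

variable {R : Type*} [CommRing R] [Nontrivial R]

noncomputable def quotSpanXPowBasis (k : ℕ) :
    Basis (Fin k) R (R[X] ⧸ R[X] ∙ (X : R[X]) ^ k) :=
  (AdjoinRoot.powerBasis' (monic_X_pow k)).basis.reindex (finCongr (natDegree_X_pow k))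

lemma quotSpanXPowBasis_apply (k : ℕ) (j : Fin k) :
    quotSpanXPowBasis k j = Submodule.Quotient.mk ((X : R[X]) ^ (j : ℕ)) := by
  unfold quotSpanXPowBasis
  -- `AdjoinRoot (X ^ k)` is `R[X] ⧸ R[X] ∙ X ^ k` with instances found along another path
  erw [Basis.reindex_apply, PowerBasis.basis_eq_pow, AdjoinRoot.powerBasis'_gen]
  rfl

end QuotientBasis

lemma DFinsupp.basis_apply {ι R : Type*} [DecidableEq ι] [Semiring R]
    {M : ι → Type*} [∀ i, AddCommMonoid (M i)] [∀ i, Module R (M i)]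
    {η : ι → Type*} (b : ∀ i, Basis (η i) R (M i)) (p : Σ i, η i) :
    DFinsupp.basis b p = DFinsupp.single p.1 (b p.1 p.2) := by
  rw [Basis.apply_eq_iff]
  ext ⟨i, j⟩
  obtain ⟨i', j'⟩ := p
  by_cases h : i' = i
  · subst h
    simpa [DFinsupp.basis, sigmaFinsuppLequivDFinsupp] using
      (Finsupp.single_apply_left sigma_mk_injective j' j (1 : R)).symm
  · simp [DFinsupp.basis, sigmaFinsuppLequivDFinsupp, DFinsupp.single_apply, h]

namespace Module.AEval'

variable {R M : Type*} [CommRing R] [AddCommGroup M] [Module R M]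

lemma of_symm_X_pow_smul (φ : End R M) (n : ℕ) (m : AEval' φ) :
    (AEval'.of φ).symm ((X : R[X]) ^ n • m) = (φ ^ n) ((AEval'.of φ).symm m) := by
  obtain ⟨v, rfl⟩ := (AEval'.of φ).surjective m
  rw [X_pow_smul_of]
  simp

lemma isTorsion'_powers_X {φ : End R M} (hφ : IsNilpotent φ) :
    IsTorsion' (AEval' φ) (Submonoid.powers (X : R[X])) := by
  obtain ⟨n, hn⟩ := hφ
  intro m
  refine ⟨⟨X ^ n, n, rfl⟩, ?_⟩
  obtain ⟨v, rfl⟩ := (AEval'.of φ).surjective m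
  simp [Submonoid.smul_def, X_pow_smul_of, hn]

end Module.AEval'

section JordanChain

variable {K V : Type*} [Field K] [AddCommGroup V] [Module K V]

def IsJordanChainBasis {ι : Type*} (φ : End K V) (x : ι → V) (k : ι → ℕ) : Prop :=
  (∀ i, (φ ^ k i) (x i) = 0) ∧
    ∃ b : Basis (Σ i, Fin (k i)) K V, ∀ p : Σ i, Fin (k i), b p = (φ ^ (p.2 : ℕ)) (x p.1)

namespace IsJordanChainBasis

variable {ι : Type*} {φ : End K V} {x : ι → V} {k : ι → ℕ}

lemma comp_equiv {ι' : Type*} (h : IsJordanChainBasis φ x k) (e : ι' ≃ ι) :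
    IsJordanChainBasis φ (x ∘ e) (k ∘ e) := by
  obtain ⟨hx, b, hb⟩ := h
  exact ⟨fun i => hx (e i), b.reindex (Equiv.sigmaCongrLeft e).symm, fun p =>
    (b.reindex_apply _ _).trans (hb _)⟩

lemma subtype_ne_zero (h : IsJordanChainBasis φ x k) :
    IsJordanChainBasis φ (fun i : {i // k i ≠ 0} => x i) (fun i => k i) := by
  obtain ⟨hx, b, hb⟩ := h
  let e := Equiv.sigmaSubtypeEquivOfSubset (fun i => Fin (k i)) (k · ≠ 0) fun _ j => j.pos.ne'
  exact ⟨fun i => hx i, b.reindex e.symm, fun p =>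
    (b.reindex_apply _ _).trans (hb (e p))⟩

end IsJordanChainBasis

lemma isJordanChainBasis_of_linearEquiv_directSum {ι : Type*} [DecidableEq ι] (φ : End K V)
    (k : ι → ℕ) (e : AEval' φ ≃ₗ[K[X]] ⨁ i, K[X] ⧸ K[X] ∙ (X : K[X]) ^ k i) :
    IsJordanChainBasis φ
      (fun i => (AEval'.of φ).symm (e.symm (DFinsupp.single i (Submodule.Quotient.mk 1)))) k := by
  set x := fun i => (AEval'.of φ).symm (e.symm (DFinsupp.single i (Submodule.Quotient.mk 1)))
  have hchain (i : ι) (j : ℕ) :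
      (AEval'.of φ).symm (e.symm (DFinsupp.single i (Submodule.Quotient.mk (X ^ j)))) =
        (φ ^ j) (x i) := by
    rw [← AEval'.of_symm_X_pow_smul, ← map_smul, ← DFinsupp.single_smul,
      ← Submodule.Quotient.mk_smul, smul_eq_mul, mul_one]
  refine ⟨fun i => ?_, ?_⟩
  · rw [← hchain, (Submodule.Quotient.mk_eq_zero _).mpr (Submodule.mem_span_singleton_self _),
      DFinsupp.single_zero, map_zero, map_zero]
  · refine ⟨((DFinsupp.basis fun i => quotSpanXPowBasis (k i)).map
      ((e.restrictScalars K).symm ≪≫ₗ (AEval'.of φ).symm)), fun p => ?_⟩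
    rw [Basis.map_apply, DFinsupp.basis_apply, quotSpanXPowBasis_apply]
    exact hchain p.1 p.2

end JordanChain

theorem stmt1 {K V : Type*} [Field K] [AddCommGroup V] [Module K V]
    [FiniteDimensional K V] (φ : Module.End K V) (hnil : IsNilpotent φ) :
    ∃ (m : ℕ) (x : Fin m → V) (k : Fin m → ℕ),
      (∀ γ, 1 ≤ k γ) ∧ (∀ γ, (φ ^ (k γ)) (x γ) = 0) ∧
      ∃ b : Module.Basis ((γ : Fin m) × Fin (k γ)) K V,
        ∀ p : (γ : Fin m) × Fin (k γ), b p = (φ ^ ((p.2 : ℕ))) (x p.1) := by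
  classical
  obtain ⟨d, k, ⟨e⟩⟩ :=
    torsion_by_prime_power_decomposition irreducible_X (AEval'.isTorsion'_powers_X hnil)
  have h := (isJordanChainBasis_of_linearEquiv_directSum φ k e).subtype_ne_zero.comp_equiv
    (Fintype.equivFin _).symm
  exact ⟨_, _, _, fun γ => Nat.one_le_iff_ne_zero.mpr ((Fintype.equivFin _).symm γ).2, h⟩
end

section
/- If two nilpotent Jordan normal bases of the same finite-dimensional vector space V with respect to the same nilpotent endomorphism φ have block-size multisets {k_γ} and {l_δ}, then these multisets are equal (the block sizes are unique up to permutation). -/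
/-!
The block sizes can be read off from the ranks of the powers of `φ`: in a Jordan basis the
vectors `φ ^ i (x γ)` with `n ≤ i` form a basis of the range of `φ ^ n`, so
`rank (φ ^ n) = ∑ γ, (k γ - n)`. The consecutive differences of these sums count the blocks of
size `> n`, and the differences of those counts give the number of blocks of each positive size.
-/

open Module Submodule Finset

namespace Multiset

lemma sum_map_tsub_eq_sum_map_tsub_succ_add_countP (s : Multiset ℕ) (n : ℕ) :
    (s.map (· - n)).sum = (s.map (· - (n + 1))).sum + s.countP (n < ·) := by
  induction s using Multiset.induction with
  | empty => simp
  | cons a s ih =>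
    simp only [map_cons, sum_cons, countP_cons, ih]
    split_ifs <;> omega

lemma countP_lt_eq_countP_succ_lt_add_count (s : Multiset ℕ) (n : ℕ) :
    s.countP (n < ·) = s.countP (n + 1 < ·) + s.count (n + 1) := by
  induction s using Multiset.induction with
  | empty => simp
  | cons a s ih =>
    simp only [countP_cons, count_cons, ih]
    split_ifs <;> omega

lemma eq_of_forall_sum_map_tsub_eq {s t : Multiset ℕ} (hs : 0 ∉ s) (ht : 0 ∉ t)
    (h : ∀ n, (s.map (· - n)).sum = (t.map (· - n)).sum) : s = t := by
  have hcountP (n : ℕ) : s.countP (n < ·) = t.countP (n < ·) := by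
    have hs := sum_map_tsub_eq_sum_map_tsub_succ_add_countP s n
    have ht := sum_map_tsub_eq_sum_map_tsub_succ_add_countP t n
    rw [h n, h (n + 1)] at hs
    omega
  ext a
  cases a with
  | zero => rw [count_eq_zero_of_notMem hs, count_eq_zero_of_notMem ht]
  | succ n =>
    have hs := countP_lt_eq_countP_succ_lt_add_count s n
    have ht := countP_lt_eq_countP_succ_lt_add_count t n
    rw [hcountP n, hcountP (n + 1)] at hs
    omega

end Multiset

lemma Fin.card_filter_le_val (k n : ℕ) : #{i : Fin k | n ≤ (i : ℕ)} = k - n := by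
  have hlt := Fin.card_filter_val_lt (n := k) (m := n)
  have hsplit := card_filter_add_card_filter_not (s := (univ : Finset (Fin k))) (· < n)
  simp only [not_lt, card_univ, Fintype.card_fin] at hsplit
  omega

lemma Fintype.card_sigma_fin_subtype_le {ι : Type*} [Fintype ι] (k : ι → ℕ) (n : ℕ) :
    Fintype.card {p : (γ : ι) × Fin (k γ) // n ≤ (p.2 : ℕ)} = ∑ γ, (k γ - n) := by
  rw [Fintype.card_subtype, ← univ_sigma_univ, filter_sigma, Finset.card_sigma]
  simp only [Fin.card_filter_le_val]

section JordanBasis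

variable {K V : Type*} [Ring K] [AddCommGroup V] [Module K V] {φ : Module.End K V}
  {ι : Type*} {k : ι → ℕ} {x : ι → V} {b : Basis ((γ : ι) × Fin (k γ)) K V}

lemma pow_apply_of_jordanBasis
    (hb : ∀ p : (γ : ι) × Fin (k γ), b p = (φ ^ (p.2 : ℕ)) (x p.1))
    (hx : ∀ γ, (φ ^ k γ) (x γ) = 0) (n : ℕ) (p : (γ : ι) × Fin (k γ)) :
    (φ ^ n) (b p) = if h : n + p.2 < k p.1 then b ⟨p.1, ⟨n + p.2, h⟩⟩ else 0 := by
  rw [hb, ← Module.End.mul_apply, ← pow_add]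
  split_ifs with h
  · rw [hb]
  · obtain ⟨j, hj⟩ := Nat.exists_eq_add_of_le (not_lt.mp h)
    rw [hj, add_comm, pow_add, Module.End.mul_apply, hx, map_zero]

lemma range_pow_eq_span_of_jordanBasis
    (hb : ∀ p : (γ : ι) × Fin (k γ), b p = (φ ^ (p.2 : ℕ)) (x p.1))
    (hx : ∀ γ, (φ ^ k γ) (x γ) = 0) (n : ℕ) :
    LinearMap.range (φ ^ n) =
      span K (Set.range fun p : {p : (γ : ι) × Fin (k γ) // n ≤ (p.2 : ℕ)} => b p) := by
  rw [LinearMap.range_eq_map, ← b.span_eq, map_span, ← Set.range_comp]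
  apply le_antisymm <;> rw [span_le] <;> rintro _ ⟨p, rfl⟩
  · rw [Function.comp_apply, pow_apply_of_jordanBasis hb hx]
    split_ifs
    · exact subset_span ⟨⟨_, Nat.le_add_right _ _⟩, rfl⟩
    · exact zero_mem _
  · obtain ⟨⟨γ, i⟩, hi : n ≤ (i : ℕ)⟩ := p
    have hin : n + (i - n) < k γ := by omega
    refine subset_span ⟨⟨γ, ⟨i - n, by omega⟩⟩, ?_⟩
    rw [Function.comp_apply, pow_apply_of_jordanBasis hb hx, dif_pos hin]
    congr
    exact Nat.add_sub_cancel' hi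

lemma finrank_range_pow_of_jordanBasis [Fintype ι] [StrongRankCondition K]
    (hb : ∀ p : (γ : ι) × Fin (k γ), b p = (φ ^ (p.2 : ℕ)) (x p.1))
    (hx : ∀ γ, (φ ^ k γ) (x γ) = 0) (n : ℕ) :
    finrank K (LinearMap.range (φ ^ n)) = ∑ γ, (k γ - n) := by
  have := nontrivial_of_invariantBasisNumber K
  rw [range_pow_eq_span_of_jordanBasis hb hx,
    finrank_span_eq_card (b := fun p : {p : (γ : ι) × Fin (k γ) // n ≤ (p.2 : ℕ)} => b p)
      (b.linearIndependent.comp _ Subtype.val_injective),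
    Fintype.card_sigma_fin_subtype_le]

end JordanBasis

theorem stmt4_general {K V : Type*} [Field K] [AddCommGroup V] [Module K V]
    (φ : Module.End K V)
    {m m' : ℕ} (k : Fin m → ℕ) (l : Fin m' → ℕ)
    (hk1 : ∀ γ, 1 ≤ k γ) (hl1 : ∀ δ, 1 ≤ l δ)
    (x : Fin m → V) (y : Fin m' → V)
    (hxzero : ∀ γ, (φ ^ (k γ)) (x γ) = 0) (hyzero : ∀ δ, (φ ^ (l δ)) (y δ) = 0)
    (b : Module.Basis ((γ : Fin m) × Fin (k γ)) K V)
    (hb : ∀ p : (γ : Fin m) × Fin (k γ), b p = (φ ^ ((p.2 : ℕ))) (x p.1))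
    (c : Module.Basis ((δ : Fin m') × Fin (l δ)) K V)
    (hc : ∀ p : (δ : Fin m') × Fin (l δ), c p = (φ ^ ((p.2 : ℕ))) (y p.1)) :
    Multiset.map k Finset.univ.val = Multiset.map l Finset.univ.val := by
  refine Multiset.eq_of_forall_sum_map_tsub_eq ?_ ?_ fun n => ?_
  · simpa using fun γ => Nat.one_le_iff_ne_zero.mp (hk1 γ)
  · simpa using fun δ => Nat.one_le_iff_ne_zero.mp (hl1 δ)
  · rw [Multiset.map_map, Multiset.map_map]
    change ∑ γ, (k γ - n) = ∑ δ, (l δ - n)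
    rw [← finrank_range_pow_of_jordanBasis hb hxzero,
      ← finrank_range_pow_of_jordanBasis hc hyzero]

theorem stmt4 {K V : Type*} [Field K] [AddCommGroup V] [Module K V]
    [FiniteDimensional K V] (φ : Module.End K V) (hnil : IsNilpotent φ)
    {m m' : ℕ} (k : Fin m → ℕ) (l : Fin m' → ℕ)
    (hk1 : ∀ γ, 1 ≤ k γ) (hl1 : ∀ δ, 1 ≤ l δ)
    (x : Fin m → V) (y : Fin m' → V)
    (hxzero : ∀ γ, (φ ^ (k γ)) (x γ) = 0) (hyzero : ∀ δ, (φ ^ (l δ)) (y δ) = 0)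
    (b : Module.Basis ((γ : Fin m) × Fin (k γ)) K V)
    (hb : ∀ p : (γ : Fin m) × Fin (k γ), b p = (φ ^ ((p.2 : ℕ))) (x p.1))
    (c : Module.Basis ((δ : Fin m') × Fin (l δ)) K V)
    (hc : ∀ p : (δ : Fin m') × Fin (l δ), c p = (φ ^ ((p.2 : ℕ))) (y p.1)) :
    Multiset.map k Finset.univ.val = Multiset.map l Finset.univ.val :=
  stmt4_general φ k l hk1 hl1 x y hxzero hyzero b hb c hc
end

section
/- Let φ be a nonzero nilpotent endomorphism of a finite-dimensional vector space V of dimension d. Then φ^(d-1) ≠ 0 if and only if φ commutes with no idempotent endomorphism ε with ε ≠ 0 and ε ≠ 1 (i.e., φ is indecomposable). -/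
/-!
If `ε` is an idempotent commuting with `φ`, then `V = range ε ⊕ range (1 - ε)` with both summands
`φ`-invariant; when `ε ≠ 0, 1` both are proper, so the nilpotent restrictions of `φ` to them are
killed by `φ ^ (d - 1)`.

Conversely, if `φ ^ (n + 1) = 0 ≠ φ ^ n` with `n + 1 < d`, pick `v` with `φ ^ n v ≠ 0`. The vectors
`v, φ v, …, φ ^ n v` are independent, so some functional `f` satisfies `f (φ ^ i v) = δ i n`. With
`P x = f x • v`, the map `π = ∑_{i + j = n} φ ^ i P φ ^ j` commutes with `φ` (the commutator
telescopes to `φ ^ (n + 1) P - P φ ^ (n + 1) = 0`) and is a projection onto the cyclic subspace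
spanned by the `φ ^ i v`, which is neither `0` nor all of `V`.
-/

open Module Finset

theorem IsNilpotent.pow_finrank_eq_zero {R M : Type*} [CommRing R] [IsDomain R] [AddCommGroup M]
    [Module R M] [Module.Finite R M] [Module.Free R M] {φ : Module.End R M} (hφ : IsNilpotent φ) :
    φ ^ finrank R M = 0 := by
  simpa [hφ.charpoly_eq_X_pow_finrank] using φ.aeval_self_charpoly

theorem mul_sum_antidiagonal_sub_sum_antidiagonal_mul {R : Type*} [Ring R] (a b : R) (n : ℕ) :
    a * ∑ p ∈ antidiagonal n, a ^ p.1 * b * a ^ p.2 - (∑ p ∈ antidiagonal n, a ^ p.1 * b * a ^ p.2) * a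
      = a ^ (n + 1) * b - b * a ^ (n + 1) := by
  induction n with
  | zero => simp
  | succ n ih =>
    have hsucc : ∑ p ∈ antidiagonal (n + 1), a ^ p.1 * b * a ^ p.2
        = b * a ^ (n + 1) + a * ∑ p ∈ antidiagonal n, a ^ p.1 * b * a ^ p.2 := by
      simp only [Nat.sum_antidiagonal_succ, mul_sum, pow_zero, one_mul, pow_succ', mul_assoc]
    rw [hsucc]
    generalize ∑ p ∈ antidiagonal n, a ^ p.1 * b * a ^ p.2 = S at ih ⊢
    calc _ = a * b * a ^ (n + 1) - b * a ^ (n + 1 + 1) + a * (a * S - S * a) := by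
          rw [pow_succ a (n + 1)]; noncomm_ring
      _ = _ := by rw [ih, pow_succ' a (n + 1)]; noncomm_ring

namespace Module.End

variable {K V : Type*} [Field K] [AddCommGroup V] [Module K V]

section Decomposable

variable [FiniteDimensional K V] {φ : Module.End K V}

theorem pow_apply_eq_zero_of_forall_mem (hφ : IsNilpotent φ) {W : Submodule K V}
    (hW : ∀ x ∈ W, φ x ∈ W) {m : ℕ} (hm : finrank K W ≤ m) {x : V} (hx : x ∈ W) :
    (φ ^ m) x = 0 := by
  have hres := (isNilpotent.restrict hW hφ).pow_finrank_eq_zero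
  rw [pow_restrict] at hres
  have hx' : (φ ^ finrank K W) x = 0 := by
    simpa [LinearMap.restrict_apply] using congrArg Subtype.val (LinearMap.congr_fun hres ⟨x, hx⟩)
  rw [← Nat.sub_add_cancel hm, pow_add, mul_apply, hx', map_zero]

theorem pow_finrank_sub_one_mul_eq_zero (hφ : IsNilpotent φ) {ε : Module.End K V}
    (hε : IsIdempotentElem ε) (h1 : ε ≠ 1) (hc : Commute ε φ) :
    φ ^ (finrank K V - 1) * ε = 0 := by
  have hinv : ∀ x ∈ LinearMap.range ε, φ x ∈ LinearMap.range ε := by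
    rintro _ ⟨y, rfl⟩
    exact ⟨φ y, LinearMap.congr_fun hc y⟩
  have hne : LinearMap.range ε ≠ ⊤ := fun htop ↦
    h1 <| LinearMap.ext fun x ↦ LinearMap.IsIdempotentElem.mem_range_iff hε |>.mp (htop ▸ trivial)
  have hlt := Submodule.finrank_lt hne
  ext x
  exact pow_apply_eq_zero_of_forall_mem hφ hinv (by omega) (LinearMap.mem_range_self ε x)

theorem pow_finrank_sub_one_eq_zero_of_isIdempotentElem (hφ : IsNilpotent φ)
    {ε : Module.End K V} (hε : IsIdempotentElem ε) (h0 : ε ≠ 0) (h1 : ε ≠ 1)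
    (hc : Commute ε φ) : φ ^ (finrank K V - 1) = 0 := by
  have h1' : 1 - ε ≠ 1 := fun h ↦ h0 (by simpa using h)
  have hc' : Commute (1 - ε) φ := (Commute.one_left φ).sub_left hc
  calc φ ^ (finrank K V - 1)
      = φ ^ (finrank K V - 1) * ε + φ ^ (finrank K V - 1) * (1 - ε) := by noncomm_ring
    _ = 0 := by
      rw [pow_finrank_sub_one_mul_eq_zero hφ hε h1 hc,
        pow_finrank_sub_one_mul_eq_zero hφ hε.one_sub h1' hc', add_zero]

end Decomposable

section Cyclic

theorem linearIndependent_pow_apply (φ : Module.End K V) {n : ℕ} {v : V}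
    (hn : (φ ^ (n + 1)) v = 0) (hv : (φ ^ n) v ≠ 0) :
    LinearIndependent K fun i : Fin (n + 1) ↦ (φ ^ (i : ℕ)) v := by
  induction n generalizing v with
  | zero => simpa using hv
  | succ n ih =>
    rw [linearIndependent_finSucc]
    have htail : Fin.tail (fun i : Fin (n + 2) ↦ (φ ^ (i : ℕ)) v)
        = fun i : Fin (n + 1) ↦ (φ ^ (i : ℕ)) (φ v) := by
      ext i
      simp [Fin.tail, pow_succ, mul_apply]
    rw [htail]
    refine ⟨ih (by rwa [← mul_apply, ← pow_succ]) (by rwa [← mul_apply, ← pow_succ]),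
      fun hmem ↦ hv ?_⟩
    have hker : Submodule.span K (Set.range fun i : Fin (n + 1) ↦ (φ ^ (i : ℕ)) (φ v))
        ≤ LinearMap.ker (φ ^ (n + 1)) := by
      rw [Submodule.span_le]
      rintro _ ⟨i, rfl⟩
      rw [SetLike.mem_coe, LinearMap.mem_ker, ← mul_apply, ← mul_apply, ← pow_add, ← pow_succ,
        show n + 1 + i + 1 = i + (n + 1 + 1) by omega, pow_add, mul_apply, hn, map_zero]
    simpa using hker hmem

theorem exists_dual_pow_apply_eq_ite (φ : Module.End K V) {n : ℕ} {v : V}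
    (hn : (φ ^ (n + 1)) v = 0) (hv : (φ ^ n) v ≠ 0) :
    ∃ f : Module.Dual K V, ∀ i : ℕ, f ((φ ^ i) v) = if i = n then 1 else 0 := by
  have hli := linearIndependent_pow_apply φ hn hv
  obtain ⟨f, hf⟩ := LinearMap.exists_extend ((Basis.span hli).coord (Fin.last n))
  refine ⟨f, fun i ↦ ?_⟩
  rcases lt_or_ge i (n + 1) with hi | hi
  · have hB : ((Basis.span hli ⟨i, hi⟩ : _) : V) = (φ ^ i) v := by
      rw [Basis.span_apply]
    have hcoord := LinearMap.congr_fun hf (Basis.span hli ⟨i, hi⟩)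
    rw [LinearMap.comp_apply, Submodule.subtype_apply, hB, Basis.coord_apply, Basis.repr_self,
      Finsupp.single_apply] at hcoord
    simpa [Fin.ext_iff, eq_comm] using hcoord
  · rw [← Nat.sub_add_cancel hi, pow_add, mul_apply, hn, map_zero, map_zero, if_neg (by omega)]

/-- When `f (φ ^ i v) = δ i n`, this is the projection onto `span {φ ^ i v | i ≤ n}` along
`⋂ j ≤ n, ker (f ∘ φ ^ j)`. -/
noncomputable def cyclicProjection (φ : Module.End K V) (n : ℕ) (v : V) (f : Module.Dual K V) :
    Module.End K V :=
  ∑ p ∈ antidiagonal n, φ ^ p.1 * f.smulRight v * φ ^ p.2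

variable {φ : Module.End K V} {n : ℕ} {v : V} {f : Module.Dual K V}

theorem cyclicProjection_apply (x : V) :
    cyclicProjection φ n v f x = ∑ p ∈ antidiagonal n, f ((φ ^ p.2) x) • (φ ^ p.1) v := by
  simp [cyclicProjection, LinearMap.sum_apply, mul_apply]

theorem commute_cyclicProjection (h : φ ^ (n + 1) = 0) :
    Commute φ (cyclicProjection φ n v f) := by
  have := mul_sum_antidiagonal_sub_sum_antidiagonal_mul φ (f.smulRight v) n
  rw [h, zero_mul, mul_zero, sub_zero] at this
  exact sub_eq_zero.mp this

theorem cyclicProjection_pow_apply (hf : ∀ i : ℕ, f ((φ ^ i) v) = if i = n then 1 else 0)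
    {m : ℕ} (hm : m ≤ n) : cyclicProjection φ n v f ((φ ^ m) v) = (φ ^ m) v := by
  rw [cyclicProjection_apply, sum_eq_single (m, n - m)]
  · rw [← mul_apply, ← pow_add, hf, if_pos (by omega), one_smul]
  · rintro ⟨i, j⟩ hij hne
    rw [HasAntidiagonal.mem_antidiagonal] at hij
    rw [← mul_apply, ← pow_add, hf, if_neg, zero_smul]
    intro hjm
    exact hne (Prod.ext (by simp; omega) (by simp; omega))
  · intro h
    exact absurd (HasAntidiagonal.mem_antidiagonal.mpr (by simp; omega)) h

theorem cyclicProjection_apply_mem_span (x : V) :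
    cyclicProjection φ n v f x ∈
      Submodule.span K (Set.range fun i : Fin (n + 1) ↦ (φ ^ (i : ℕ)) v) := by
  rw [cyclicProjection_apply]
  refine Submodule.sum_mem _ fun p hp ↦ Submodule.smul_mem _ _ (Submodule.subset_span ?_)
  exact ⟨⟨p.1, by have := HasAntidiagonal.mem_antidiagonal.mp hp; omega⟩, rfl⟩

theorem isIdempotentElem_cyclicProjection
    (hf : ∀ i : ℕ, f ((φ ^ i) v) = if i = n then 1 else 0) :
    IsIdempotentElem (cyclicProjection φ n v f) := by
  have hfix : Set.EqOn (cyclicProjection φ n v f) (LinearMap.id : Module.End K V)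
      (Set.range fun i : Fin (n + 1) ↦ (φ ^ (i : ℕ)) v) := by
    rintro _ ⟨i, rfl⟩
    exact cyclicProjection_pow_apply hf (Nat.lt_succ_iff.mp i.isLt)
  ext x
  exact LinearMap.eqOn_span hfix (cyclicProjection_apply_mem_span x)

theorem exists_isIdempotentElem_commute_of_pow_eq_zero [FiniteDimensional K V] {m : ℕ}
    (hm : m < finrank K V) (h : φ ^ m = 0) :
    ∃ ε : Module.End K V, IsIdempotentElem ε ∧ ε ≠ 0 ∧ ε ≠ 1 ∧ Commute ε φ := by
  have : Nontrivial V := Module.nontrivial_of_finrank_pos (R := K) (by omega)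
  obtain ⟨n, hclass⟩ := Nat.exists_eq_add_one.mpr (pos_nilpotencyClass_iff.mpr ⟨m, h⟩)
  obtain ⟨hn, hn'⟩ := nilpotencyClass_eq_succ_iff.mp hclass
  have hnm : n + 1 ≤ m := hclass ▸ Nat.sInf_le h
  obtain ⟨v, hv⟩ : ∃ v, (φ ^ n) v ≠ 0 := not_forall.mp fun h ↦ hn' (LinearMap.ext h)
  obtain ⟨f, hf⟩ := exists_dual_pow_apply_eq_ite φ (by rw [hn, LinearMap.zero_apply]) hv
  refine ⟨cyclicProjection φ n v f, isIdempotentElem_cyclicProjection hf, fun h0 ↦ ?_,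
    fun h1 ↦ ?_, (commute_cyclicProjection hn).symm⟩
  · have hfix := cyclicProjection_pow_apply hf (Nat.zero_le n)
    rw [h0, pow_zero, LinearMap.zero_apply, one_apply] at hfix
    exact hv (by rw [← hfix, map_zero])
  · have hspan : Submodule.span K (Set.range fun i : Fin (n + 1) ↦ (φ ^ (i : ℕ)) v) = ⊤ :=
      Submodule.eq_top_iff'.mpr fun x ↦ by
        simpa [h1] using cyclicProjection_apply_mem_span (φ := φ) (n := n) (v := v) (f := f) x
    have hcard := finrank_range_le_card (R := K) fun i : Fin (n + 1) ↦ (φ ^ (i : ℕ)) v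
    rw [Set.finrank, hspan, finrank_top, Fintype.card_fin] at hcard
    omega

end Cyclic

end Module.End

theorem stmt5_general {K V : Type*} [Field K] [AddCommGroup V] [Module K V]
    [FiniteDimensional K V] (d : ℕ) (hd : d = Module.finrank K V) (hd1 : 1 ≤ d)
    (φ : Module.End K V) (hnil : IsNilpotent φ) :
    φ ^ (d - 1) ≠ 0 ↔
      ¬ ∃ ε : Module.End K V, ε * ε = ε ∧ ε ≠ 0 ∧ ε ≠ 1 ∧ ε * φ = φ * ε := by
  subst hd
  constructor
  · rintro hpow ⟨ε, hε, h0, h1, hc⟩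
    exact hpow (Module.End.pow_finrank_sub_one_eq_zero_of_isIdempotentElem hnil hε h0 h1 hc)
  · exact fun hno hpow ↦
      hno (Module.End.exists_isIdempotentElem_commute_of_pow_eq_zero (by omega) hpow)

theorem stmt5 {K V : Type*} [Field K] [AddCommGroup V] [Module K V]
    [FiniteDimensional K V] (d : ℕ) (hd : d = Module.finrank K V) (hd1 : 1 ≤ d)
    (φ : Module.End K V) (hnil : IsNilpotent φ) (hφ : φ ≠ 0) :
    φ ^ (d - 1) ≠ 0 ↔
      ¬ ∃ ε : Module.End K V, ε * ε = ε ∧ ε ≠ 0 ∧ ε ≠ 1 ∧ ε * φ = φ * ε :=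
  stmt5_general d hd hd1 φ hnil
end

section
/- Let φ be a nilpotent endomorphism of a finite-dimensional K-vector space V and σ an arbitrary endomorphism of V. If every endomorphism commuting with φ also commutes with σ (Cen(φ) ⊆ Cen(σ)), then σ is a polynomial in φ, i.e., σ = f(φ) for some polynomial f ∈ K[z]. -/
/-!
Let `m` be the nilpotency index of `φ`, pick `v` with `φ^(m-1) v ≠ 0` and a functional `l` with
`l (φ^(m-1) v) ≠ 0`. The coordinates `x ↦ (l (φ^i x))_{i<m}` are injective on the cyclic subspace
`K[φ] v`, because the Hankel matrix `(l (φ^(i+j) v))` vanishes below its antidiagonal and is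
nonzero on it; their kernel is `φ`-stable, hence a `φ`-stable complement of `K[φ] v`. So for every
`u` the map `p(φ) v ↦ p(φ) u`, extended by `0` on that complement, commutes with `φ` and sends
`v` to `u`. For `u = v` it is a projection onto `K[φ] v` commuting with `σ`, whence
`σ v = f(φ) v`, and then `σ u = σ ψ v = ψ σ v = f(φ) ψ v = f(φ) u`.
-/

open Polynomial Module

theorem pow_mul_aeval_eq_coeff_zero_smul {R A : Type*} [CommSemiring R] [Semiring A]
    [Algebra R A] {a : A} {n : ℕ} (ha : a ^ (n + 1) = 0) (q : R[X]) :
    a ^ n * aeval a q = q.coeff 0 • a ^ n := by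
  conv_lhs => rw [← X_mul_divX_add q]
  rw [map_add, map_mul, aeval_X, aeval_C, mul_add, ← mul_assoc, ← pow_succ, ha, zero_mul,
    zero_add, ← Algebra.commutes, Algebra.smul_def]

namespace Module.End

theorem exists_eq_aeval_of_forall_commute {R M : Type*} [CommSemiring R] [AddCommMonoid M]
    [Module R M] {φ σ : Module.End R M} (hσ : ∀ ψ : Module.End R M, Commute ψ φ → Commute ψ σ)
    (v : M) (hv : ∀ u, ∃ ψ : Module.End R M, Commute ψ φ ∧ ψ v = u ∧
      ∀ x, ∃ p : R[X], ψ x = aeval φ p u) :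
    ∃ f : R[X], σ = aeval φ f := by
  obtain ⟨π, hπφ, hπv, hπ⟩ := hv v
  obtain ⟨f, hf⟩ := hπ (σ v)
  have hσv : σ v = aeval φ f v := by
    rw [← hf, ← mul_apply, (hσ π hπφ).eq, mul_apply, hπv]
  refine ⟨f, LinearMap.ext fun u => ?_⟩
  obtain ⟨ψ, hψφ, rfl, -⟩ := hv u
  have hψf : Commute ψ (aeval φ f) :=
    Algebra.commute_of_mem_adjoin_singleton_of_commute (aeval_mem_adjoin_singleton R φ) hψφ
  rw [← mul_apply, ← (hσ ψ hψφ).eq, mul_apply, hσv, ← mul_apply, hψf.eq, mul_apply]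

variable {K V : Type*} [Field K] [AddCommGroup V] [Module K V]

noncomputable def dualKrylov (φ : Module.End K V) (l : Dual K V) (m : ℕ) : V →ₗ[K] Fin m → K :=
  LinearMap.pi fun i => l ∘ₗ φ ^ (i : ℕ)

noncomputable def aevalApply (φ : Module.End K V) (u : V) : K[X] →ₗ[K] V :=
  LinearMap.applyₗ u ∘ₗ (aeval φ).toLinearMap

@[simp]
theorem dualKrylov_apply (φ : Module.End K V) (l : Dual K V) (m : ℕ) (x : V) (i : Fin m) :
    φ.dualKrylov l m x i = l ((φ ^ (i : ℕ)) x) := rfl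

@[simp]
theorem aevalApply_apply (φ : Module.End K V) (u : V) (p : K[X]) :
    φ.aevalApply u p = aeval φ p u := rfl

variable {φ : Module.End K V} {m : ℕ} {l : Dual K V} {v : V}

theorem dualKrylov_apply_eq_of_eq (hm : φ ^ m = 0) {x y : V}
    (h : φ.dualKrylov l m x = φ.dualKrylov l m y) :
    φ.dualKrylov l m (φ x) = φ.dualKrylov l m (φ y) := by
  funext i
  simp only [dualKrylov_apply, ← mul_apply, ← pow_succ]
  rcases lt_or_ge ((i : ℕ) + 1) m with hi | hi
  · exact congrFun h ⟨i + 1, hi⟩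
  · simp [pow_eq_zero_of_le hi hm]

theorem X_pow_dvd_of_dualKrylov_aeval_eq_zero (hm : φ ^ m = 0) (hl : l ((φ ^ (m - 1)) v) ≠ 0)
    {p : K[X]} (hp : φ.dualKrylov l m (aeval φ p v) = 0) : X ^ m ∣ p := by
  classical
  by_contra hndvd
  simp only [X_pow_dvd_iff, not_forall, exists_prop] at hndvd
  obtain ⟨d, hdm, ⟨q, rfl⟩, hd⟩ : ∃ d < m, X ^ d ∣ p ∧ p.coeff d ≠ 0 :=
    ⟨Nat.find hndvd, (Nat.find_spec hndvd).1,
      X_pow_dvd_iff.2 fun e he => by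
        simpa [he.trans (Nat.find_spec hndvd).1] using Nat.find_min hndvd he,
      (Nat.find_spec hndvd).2⟩
  obtain ⟨n, rfl⟩ : ∃ n, m = n + 1 := ⟨m - 1, by omega⟩
  have hq : q.coeff 0 = (X ^ d * q).coeff d := by simpa using (coeff_X_pow_mul q d 0).symm
  have h := congrFun hp ⟨n - d, by omega⟩
  rw [dualKrylov_apply, map_mul, map_pow, aeval_X, mul_apply, ← mul_apply, ← pow_add,
    Nat.sub_add_cancel (by omega), ← mul_apply, pow_mul_aeval_eq_coeff_zero_smul hm,
    LinearMap.smul_apply, map_smul, smul_eq_mul, hq] at h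
  exact mul_ne_zero hd (by simpa using hl) h

theorem aeval_eq_of_dualKrylov_aeval_eq (hm : φ ^ m = 0) (hl : l ((φ ^ (m - 1)) v) ≠ 0)
    {p q : K[X]} (h : φ.dualKrylov l m (aeval φ p v) = φ.dualKrylov l m (aeval φ q v)) :
    aeval φ p = aeval φ q := by
  obtain ⟨r, hr⟩ := X_pow_dvd_of_dualKrylov_aeval_eq_zero hm hl (p := p - q) (by simp [h])
  rw [← sub_eq_zero, ← map_sub, hr, map_mul, map_pow, aeval_X, hm, zero_mul]

theorem exists_dualKrylov_aeval_eq (hm : φ ^ m = 0) (hl : l ((φ ^ (m - 1)) v) ≠ 0) :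
    ∃ c : V →ₗ[K] K[X], ∀ x, φ.dualKrylov l m (aeval φ (c x) v) = φ.dualKrylov l m x := by
  classical
  set N := φ.dualKrylov l m ∘ₗ φ.aevalApply v
  have hinj : Function.Injective (N ∘ₗ ofFn m) := by
    rw [← LinearMap.ker_eq_bot, LinearMap.ker_eq_bot']
    intro a ha
    have hzero : ofFn m a = 0 :=
      eq_zero_of_dvd_of_degree_lt (X_pow_dvd_of_dualKrylov_aeval_eq_zero hm hl ha)
        (by simpa using ofFn_degree_lt a)
    exact injective_ofFn m (hzero.trans (ofFn_zero m).symm)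
  have hsurj : Function.Surjective N :=
    Function.Surjective.of_comp (g := ofFn m) (LinearMap.injective_iff_surjective.1 hinj)
  obtain ⟨g, hg⟩ := N.exists_rightInverse_of_surjective (LinearMap.range_eq_top.2 hsurj)
  exact ⟨g ∘ₗ φ.dualKrylov l m, fun x => LinearMap.congr_fun hg (φ.dualKrylov l m x)⟩

theorem exists_commute_apply_eq (hm : φ ^ m = 0) (hv : (φ ^ (m - 1)) v ≠ 0) (u : V) :
    ∃ ψ : Module.End K V, Commute ψ φ ∧ ψ v = u ∧ ∀ x, ∃ p : K[X], ψ x = aeval φ p u := by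
  obtain ⟨l, hl⟩ := Projective.exists_dual_ne_zero K hv
  obtain ⟨c, hc⟩ := exists_dualKrylov_aeval_eq hm hl
  refine ⟨φ.aevalApply u ∘ₗ c, ?_, ?_, fun x => ⟨c x, rfl⟩⟩
  · ext x
    have h : aeval φ (c (φ x)) = aeval φ (X * c x) := by
      refine aeval_eq_of_dualKrylov_aeval_eq hm hl ?_
      rw [hc, map_mul, aeval_X, mul_apply]
      exact dualKrylov_apply_eq_of_eq hm (hc x).symm
    simp [h]
  · have h : aeval φ (c v) = aeval φ 1 :=
      aeval_eq_of_dualKrylov_aeval_eq hm hl (by rw [hc, map_one, one_apply])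
    simp [h]

end Module.End

theorem stmt10_general {K V : Type*} [Field K] [AddCommGroup V] [Module K V]
    (φ : Module.End K V) (hnil : IsNilpotent φ)
    (σ : Module.End K V)
    (hsub : ∀ ψ : Module.End K V, ψ * φ = φ * ψ → ψ * σ = σ * ψ) :
    ∃ f : Polynomial K, σ = Polynomial.aeval φ f := by
  rcases subsingleton_or_nontrivial V with hV | hV
  · exact ⟨0, Subsingleton.elim _ _⟩
  obtain ⟨v, hv⟩ : ∃ v, (φ ^ (nilpotencyClass φ - 1)) v ≠ 0 :=
    not_forall.1 fun h => pow_pred_nilpotencyClass hnil (LinearMap.ext h)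
  exact Module.End.exists_eq_aeval_of_forall_commute hsub v
    (Module.End.exists_commute_apply_eq (pow_nilpotencyClass hnil) hv)

theorem stmt10 {K V : Type*} [Field K] [AddCommGroup V] [Module K V]
    [FiniteDimensional K V] (φ : Module.End K V) (hnil : IsNilpotent φ)
    (σ : Module.End K V)
    (hsub : ∀ ψ : Module.End K V, ψ * φ = φ * ψ → ψ * σ = σ * ψ) :
    ∃ f : Polynomial K, σ = Polynomial.aeval φ f :=
  stmt10_general φ hnil σ hsub
end

section
/- Let φ be a nilpotent endomorphism of a finite-dimensional K-vector space V and σ ∈ End_K(V). Then Cen(φ) ⊆ Cen(σ) if and only if σ = f(φ) for some polynomial f ∈ K[z]. -/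
open Polynomial Module
open scoped DirectSum

/-- Abstract key lemma: if there is a vector `v`, a projection onto its span, and
`ann v` kills everything, then any `σ` commuting with all `R`-linear
endomorphisms is scalar multiplication. -/
lemma key_abstract {R M : Type*} [CommRing R] [AddCommGroup M] [Module R M]
    (v : M) (π : M →ₗ[R] M) (hπv : π v = v) (hπr : ∀ x, π x ∈ Submodule.span R {v})
    (hann : ∀ r : R, r • v = 0 → ∀ w : M, r • w = 0)
    (σ : M →ₗ[R] M) (hσ : ∀ ψ : M →ₗ[R] M, σ ∘ₗ ψ = ψ ∘ₗ σ) :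
    ∃ r : R, ∀ w, σ w = r • w := by
  have hσv : σ v ∈ Submodule.span R {v} := by
    have : σ (π v) = π (σ v) := LinearMap.congr_fun (hσ π) v
    rw [hπv] at this
    rw [this]; exact hπr _
  obtain ⟨r, hr⟩ := Submodule.mem_span_singleton.mp hσv
  refine ⟨r, fun w => ?_⟩
  -- construct ψw with ψw v = w
  have hle : Ideal.torsionOf R M v ≤ LinearMap.ker (LinearMap.toSpanSingleton R M w) := by
    intro s hs
    simp only [Ideal.mem_torsionOf_iff] at hs
    simpa using hann s hs w
  let lift : (R ⧸ Ideal.torsionOf R M v) →ₗ[R] M :=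
    Submodule.liftQ _ (LinearMap.toSpanSingleton R M w) hle
  let ψw : M →ₗ[R] M :=
    lift ∘ₗ (Ideal.quotTorsionOfEquivSpanSingleton R M v).symm.toLinearMap ∘ₗ
      (π.codRestrict (Submodule.span R {v}) hπr)
  have hψwv : ψw v = w := by
    have h1 : (π.codRestrict (Submodule.span R {v}) hπr) v
        = ⟨v, Submodule.mem_span_singleton_self v⟩ := by
      ext; simp [hπv]
    have h2 : (Ideal.quotTorsionOfEquivSpanSingleton R M v).symm
        ⟨v, Submodule.mem_span_singleton_self v⟩ = Submodule.Quotient.mk 1 := by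
      apply (Ideal.quotTorsionOfEquivSpanSingleton R M v).injective
      rw [LinearEquiv.apply_symm_apply,
        Ideal.quotTorsionOfEquivSpanSingleton_apply_mk, one_smul]
    simp only [ψw, LinearMap.comp_apply, LinearEquiv.coe_coe, h1, h2]
    show Submodule.liftQ _ (LinearMap.toSpanSingleton R M w) hle
      (Submodule.Quotient.mk 1) = w
    rw [Submodule.liftQ_apply, LinearMap.toSpanSingleton_apply, one_smul]
  have : σ (ψw v) = ψw (σ v) := LinearMap.congr_fun (hσ ψw) v
  rw [hψwv, ← hr, map_smul, hψwv] at this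
  exact this

/-- Key lemma over a PID: a linear endomorphism of a finite module killed by a prime
power, commuting with all endomorphisms, is scalar multiplication. -/
lemma key_pid {R M : Type*} [CommRing R] [IsDomain R] [IsPrincipalIdealRing R]
    [AddCommGroup M] [Module R M] [Module.Finite R M]
    (q : R) (hq : Prime q) (n : ℕ) (hqn : ∀ w : M, q ^ n • w = 0)
    (σ : M →ₗ[R] M) (hσ : ∀ ψ : M →ₗ[R] M, σ ∘ₗ ψ = ψ ∘ₗ σ) :
    ∃ r : R, ∀ w, σ w = r • w := by
  classical
  let eu : ULift.{u_1} M ≃ₗ[R] M := ULift.moduleEquiv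
  have : Module.Finite R (ULift.{u_1} M) := Module.Finite.equiv eu.symm
  have htor : Module.IsTorsion R (ULift.{u_1} M) := fun w =>
    ⟨⟨q ^ n, mem_nonZeroDivisors_of_ne_zero (pow_ne_zero n hq.ne_zero)⟩, by
      rw [Submonoid.mk_smul]
      apply eu.injective; rw [map_smul, map_zero]; exact hqn _⟩
  obtain ⟨ι, hfin, p, hp, e, ⟨ee0⟩⟩ := Module.equiv_directSum_of_isTorsion htor
  have ee : M ≃ₗ[R] ⨁ (i : ι), R ⧸ R ∙ p i ^ e i := eu.symm.trans ee0
  by_cases hι : Nonempty ι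
  · -- every p i ^ e i divides q ^ n
    have hdvd : ∀ i, p i ^ e i ∣ q ^ n := by
      intro i
      have h0 : q ^ n • (ee.symm (DirectSum.lof R ι _ i
          (Submodule.Quotient.mk 1))) = 0 := hqn _
      have h1 : q ^ n • (DirectSum.lof R ι (fun i => R ⧸ R ∙ p i ^ e i) i
          (Submodule.Quotient.mk 1)) = 0 := by
        have := congrArg ee h0
        rwa [map_smul, LinearEquiv.apply_symm_apply, map_zero] at this
      have h2 : q ^ n • (Submodule.Quotient.mk 1 : R ⧸ R ∙ p i ^ e i) = 0 := by
        have h3 := congrArg (DirectSum.component R ι (fun i => R ⧸ R ∙ p i ^ e i) i) h1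
        rwa [map_smul, DirectSum.component.lof_self, map_zero] at h3
      rw [← Submodule.Quotient.mk_smul, Submodule.Quotient.mk_eq_zero,
        smul_eq_mul, mul_one] at h2
      obtain ⟨c, hc⟩ := Submodule.mem_span_singleton.mp h2
      exact ⟨c, by rw [← hc]; simp only [smul_eq_mul]; ring⟩
    -- each p i ^ e i is associated to a power of q
    have hassoc : ∀ i, ∃ d ≤ n, Associated (q ^ d) (p i ^ e i) := by
      intro i
      obtain ⟨d, hd, ha⟩ := (dvd_prime_pow hq n).mp (hdvd i)
      exact ⟨d, hd, ha.symm⟩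
    choose d hdn ha using hassoc
    -- pick i0 with maximal d
    obtain ⟨i0, -, hi0⟩ := Finset.exists_max_image Finset.univ d ⟨Classical.arbitrary ι,
      Finset.mem_univ _⟩
    set v : M := ee.symm (DirectSum.lof R ι _ i0 (Submodule.Quotient.mk 1)) with hv
    set π : M →ₗ[R] M := ee.symm.toLinearMap ∘ₗ (DirectSum.lof R ι _ i0) ∘ₗ
      (DirectSum.component R ι _ i0) ∘ₗ ee.toLinearMap with hπ
    -- apply abstract lemma
    refine key_abstract v π ?_ ?_ ?_ σ hσ
    · simp only [hπ, LinearMap.comp_apply, LinearEquiv.coe_coe, hv,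
        LinearEquiv.apply_symm_apply, DirectSum.component.lof_self]
    · intro x
      obtain ⟨s, hs⟩ := Submodule.Quotient.mk_surjective _
        (DirectSum.component R ι (fun i => R ⧸ R ∙ p i ^ e i) i0 (ee x))
      have : π x = s • v := by
        simp only [hπ, LinearMap.comp_apply, LinearEquiv.coe_coe, ← hs, hv]
        rw [show (Submodule.Quotient.mk s : R ⧸ R ∙ p i0 ^ e i0)
            = s • Submodule.Quotient.mk 1 by
          rw [← Submodule.Quotient.mk_smul, smul_eq_mul, mul_one], map_smul, map_smul]
      rw [this]
      exact Submodule.smul_mem _ _ (Submodule.mem_span_singleton_self v)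
    · intro r hrv w
      -- p i0 ^ e i0 ∣ r
      have h1 : r • (DirectSum.lof R ι (fun i => R ⧸ R ∙ p i ^ e i) i0
          (Submodule.Quotient.mk 1)) = 0 := by
        have := congrArg ee hrv
        rwa [map_smul, hv, LinearEquiv.apply_symm_apply, map_zero] at this
      have h2 : r • (Submodule.Quotient.mk 1 : R ⧸ R ∙ p i0 ^ e i0) = 0 := by
        have h3 := congrArg (DirectSum.component R ι (fun i => R ⧸ R ∙ p i ^ e i) i0) h1
        rwa [map_smul, DirectSum.component.lof_self, map_zero] at h3
      rw [← Submodule.Quotient.mk_smul, Submodule.Quotient.mk_eq_zero,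
        smul_eq_mul, mul_one] at h2
      obtain ⟨c, hc⟩ := Submodule.mem_span_singleton.mp h2
      have hdvd_r : ∀ i, p i ^ e i ∣ r := by
        intro i
        have h3 : p i ^ e i ∣ q ^ d i0 :=
          (ha i).symm.dvd.trans (pow_dvd_pow q (hi0 i (Finset.mem_univ i)))
        have h4 : q ^ d i0 ∣ r := (ha i0).dvd.trans
          ⟨c, by rw [← hc]; simp only [smul_eq_mul]; ring⟩
        exact h3.trans h4
      -- r kills everything
      have hkill : ∀ x : ⨁ (i : ι), R ⧸ R ∙ p i ^ e i, r • x = 0 := by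
        intro x
        induction x using DirectSum.induction_on with
        | zero => simp
        | of i b =>
          have hb : r • b = 0 := by
            obtain ⟨s, hs⟩ := Submodule.Quotient.mk_surjective _ b
            rw [← hs, ← Submodule.Quotient.mk_smul, Submodule.Quotient.mk_eq_zero]
            obtain ⟨k, hk⟩ := hdvd_r i
            exact Submodule.mem_span_singleton.mpr
              ⟨k * s, by simp only [smul_eq_mul]; rw [hk]; ring⟩
          rw [← DirectSum.lof_eq_of R, ← map_smul, hb, map_zero]
        | add x y hx hy => rw [smul_add, hx, hy, add_zero]
      have := congrArg ee.symm (hkill (ee w))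
      rwa [map_smul, LinearEquiv.symm_apply_apply, map_zero] at this
  · -- M is trivial
    refine ⟨0, fun w => ?_⟩
    have : Subsingleton (⨁ (i : ι), R ⧸ R ∙ p i ^ e i) := by
      rw [not_nonempty_iff] at hι
      infer_instance
    have hw : ∀ x : M, x = 0 := fun x => by
      have := Subsingleton.elim (ee x) (ee 0)
      simpa using ee.injective this
    rw [hw w, hw (σ 0)]
    simp

theorem stmt11 {K V : Type*} [Field K] [AddCommGroup V] [Module K V]
    [FiniteDimensional K V] (φ : Module.End K V) (hnil : IsNilpotent φ)
    (σ : Module.End K V) :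
    (∀ ψ : Module.End K V, ψ * φ = φ * ψ → ψ * σ = σ * ψ) ↔
      ∃ f : Polynomial K, σ = Polynomial.aeval φ f := by
  constructor
  · intro hcen
    obtain ⟨n, hn⟩ := hnil
    have hσφ : σ * φ = φ * σ := (hcen φ rfl).symm
    have hσφ' : ∀ m : V, σ (φ m) = φ (σ m) := fun m => LinearMap.congr_fun hσφ m
    -- σ as an R[X]-linear endomorphism of M
    let σ' : Module.AEval' φ →ₗ[Polynomial K] Module.AEval' φ :=
      LinearMap.ofAEval φ ((Module.AEval'.of φ).toLinearMap ∘ₗ σ) (fun m => by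
        simp only [LinearMap.comp_apply, LinearEquiv.coe_coe]
        rw [show φ • m = φ m from rfl, hσφ', ← Module.AEval'.X_smul_of])
    have hσ'apply : ∀ m : V, σ' (Module.AEval'.of φ m) = Module.AEval'.of φ (σ m) := by
      intro m
      show ((Module.AEval'.of φ).toLinearMap ∘ₗ σ) ((Module.AEval'.of φ).symm (Module.AEval'.of φ m)) = Module.AEval'.of φ (σ m)
      simp
    have hσ'x : ∀ x : Module.AEval' φ, σ' x = Module.AEval'.of φ (σ ((Module.AEval'.of φ).symm x)) := fun x => by
      conv_lhs => rw [← LinearEquiv.apply_symm_apply (Module.AEval'.of φ) x]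
      rw [hσ'apply]
    -- σ' commutes with every R[X]-linear endomorphism
    have hσ' : ∀ ψ' : Module.AEval' φ →ₗ[Polynomial K] Module.AEval' φ, σ' ∘ₗ ψ' = ψ' ∘ₗ σ' := by
      intro ψ'
      let ψ : Module.End K V := (Module.AEval'.of φ).symm.toLinearMap ∘ₗ (ψ'.restrictScalars K) ∘ₗ (Module.AEval'.of φ).toLinearMap
      have hψapply : ∀ x : Module.AEval' φ, ψ' x = Module.AEval'.of φ (ψ ((Module.AEval'.of φ).symm x)) := fun x => by
        simp [ψ]
      have hψφ : ψ * φ = φ * ψ := by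
        ext m
        show ψ (φ m) = φ (ψ m)
        simp only [ψ, LinearMap.comp_apply, LinearEquiv.coe_coe,
          LinearMap.coe_restrictScalars]
        rw [← Module.AEval'.of_symm_X_smul, ← map_smul, ← Module.AEval'.X_smul_of]
      have hcomm := hcen ψ hψφ
      have hcomm' : ∀ m : V, ψ (σ m) = σ (ψ m) := fun m => LinearMap.congr_fun hcomm m
      ext x
      simp only [LinearMap.comp_apply]
      rw [hψapply x, hψapply (σ' x), hσ'x (Module.AEval'.of φ (ψ ((Module.AEval'.of φ).symm x))), hσ'x x]
      simp only [LinearEquiv.symm_apply_apply]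
      rw [hcomm']
    -- X^n kills M
    have hX : Prime (X : Polynomial K) := Polynomial.prime_X
    have hXn : ∀ w : Module.AEval' φ, (X : Polynomial K) ^ n • w = 0 := by
      intro w
      have h1 := Module.AEval.of_symm_smul (R := K) (M := V) (a := φ)
        ((X : Polynomial K) ^ n) w
      rw [map_pow, Polynomial.aeval_X, hn, zero_smul] at h1
      have := congrArg (Module.AEval'.of φ) h1
      rwa [LinearEquiv.apply_symm_apply, map_zero] at this
    obtain ⟨r, hr⟩ := key_pid (X : Polynomial K) hX n hXn σ' hσ'
    refine ⟨r, ?_⟩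
    ext m
    have h1 := hr (Module.AEval'.of φ m)
    rw [hσ'apply] at h1
    have h2 := congrArg (Module.AEval'.of φ).symm h1
    rw [LinearEquiv.symm_apply_apply, Module.AEval.of_symm_smul,
      LinearEquiv.symm_apply_apply] at h2
    exact h2
  · rintro ⟨f, rfl⟩ ψ hψ
    induction f using Polynomial.induction_on' with
    | add p q hp hq => simp only [map_add, mul_add, add_mul, hp, hq]
    | monomial n a =>
      rw [Polynomial.aeval_monomial]
      have hcomm : Commute ψ φ := hψ
      have : Commute ψ (algebraMap K (Module.End K V) a * φ ^ n) :=
        (Algebra.commute_algebraMap_right a ψ).mul_right (hcomm.pow_right n)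
      exact this
end

section
/- Let A ∈ M_d(K) be a nilpotent matrix over a field K, with Jordan block sizes k_1 ≥ ... ≥ k_m ≥ 1. Then the centralizer Cen(A) is isomorphic as a K-algebra to the algebra C_A of m×m matrices whose (i,j) entry lies in z^{l_{i,j}}·K[z]/(z^{k_i}), where l_{i,j} = max(k_i - k_j, 0), with the natural matrix operations. -/
/-
Let `X` act on `V` through `f`. The hypotheses say that `V` is the direct sum of the cyclic
`K[X]`-modules `K[X] ∙ x i ≅ K[X] ⧸ (X ^ k i)`, and the centralizer of `f` is the algebra of
`K[X]`-linear endomorphisms of `V`. Such an endomorphism `g` is determined by the images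
`g (x j) = ∑ i, P i j (f) (x i)`, and a matrix `P` defines one exactly when `f ^ k j` kills
`∑ i, P i j (f) (x i)`, i.e. when `X ^ k i ∣ X ^ k j * P i j`, which means
`X ^ (k i - k j) ∣ P i j`.
Two such matrices give the same endomorphism iff they agree modulo `X ^ k i` in row `i`.
-/

open Polynomial

/-- The algebra of `m × m` matrices over `K[z]` whose `(i,j)` entry is divisible by
`z ^ (k i - k j)` (truncated subtraction, i.e. `z ^ max (k i - k j) 0`).  The algebra
`C_A` of the statement is the quotient of `NX k` by the set of matrices whose `(i,j)`
entry is divisible by `z ^ k i` (row-wise reduction modulo `z ^ k i`). -/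
def NX {K : Type*} [Field K] {m : ℕ} (k : Fin m → ℕ) :
    Subalgebra K (Matrix (Fin m) (Fin m) (Polynomial K)) where
  carrier := {P | ∀ i j, (X : Polynomial K) ^ (k i - k j) ∣ P i j}
  mul_mem' := by
    intro P Q hP hQ i j
    have : ∀ t : Fin m, (X : Polynomial K) ^ (k i - k j) ∣ P i t * Q t j := by
      intro t
      have h1 := hP i t
      have h2 := hQ t j
      have hle : k i - k j ≤ (k i - k t) + (k t - k j) := by omega
      calc (X : Polynomial K) ^ (k i - k j)
          ∣ (X : Polynomial K) ^ ((k i - k t) + (k t - k j)) := pow_dvd_pow _ hle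
        _ = X ^ (k i - k t) * X ^ (k t - k j) := pow_add _ _ _
        _ ∣ P i t * Q t j := mul_dvd_mul h1 h2
    simpa [Matrix.mul_apply] using Finset.dvd_sum fun t _ => this t
  add_mem' := by
    intro P Q hP hQ i j
    simpa using dvd_add (hP i j) (hQ i j)
  one_mem' := by
    intro i j
    by_cases h : i = j
    · subst h; simp [Matrix.one_apply]
    · simp [Matrix.one_apply, h]
  zero_mem' := by intro i j; simp
  algebraMap_mem' := by
    intro c i j
    by_cases h : i = j
    · subst h; simp [Matrix.algebraMap_matrix_apply]
    · simp [Matrix.algebraMap_matrix_apply, h]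

section Polynomial

variable {R M : Type*} [CommSemiring R]

theorem Polynomial.X_pow_sub_dvd_of_X_pow_dvd_X_pow_mul {a c : ℕ} {p : R[X]}
    (h : X ^ a ∣ X ^ c * p) : X ^ (a - c) ∣ p := by
  rw [X_pow_dvd_iff] at h ⊢
  intro n hn
  simpa only [coeff_X_pow_mul] using h (n + c) (by omega)

variable [AddCommMonoid M] [Module R M]

theorem Polynomial.aeval_X_pow_mul_apply (f : Module.End R M) (n : ℕ) (p : R[X]) (v : M) :
    aeval f (X ^ n * p) v = (f ^ n) (aeval f p v) := by
  rw [map_mul, map_pow, aeval_X, Module.End.mul_apply]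

end Polynomial

section JordanBasis

variable {K V ι : Type*} [CommRing K] [AddCommGroup V] [Module K V] {k : ι → ℕ}

structure IsJordanBasis (f : Module.End K V) (x : ι → V)
    (b : Module.Basis (Σ i, Fin (k i)) K V) : Prop where
  pow_apply_self_eq_zero : ∀ i, (f ^ k i) (x i) = 0
  basis_apply : ∀ p, b p = (f ^ (p.2 : ℕ)) (x p.1)

namespace IsJordanBasis

variable {f : Module.End K V} {x : ι → V} {b : Module.Basis (Σ i, Fin (k i)) K V}

theorem pow_apply_eq_zero_of_le (hJ : IsJordanBasis f x b) {i : ι} {n : ℕ} (hn : k i ≤ n) :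
    (f ^ n) (x i) = 0 := by
  rw [← Nat.sub_add_cancel hn, pow_add, Module.End.mul_apply, hJ.pow_apply_self_eq_zero,
    map_zero]

theorem aeval_apply_eq_zero_of_dvd (hJ : IsJordanBasis f x b) {i : ι} {p : K[X]}
    (hp : X ^ k i ∣ p) : aeval f p (x i) = 0 := by
  obtain ⟨q, rfl⟩ := hp
  rw [mul_comm, map_mul, Module.End.mul_apply, map_pow, aeval_X, hJ.pow_apply_self_eq_zero,
    map_zero]

theorem aeval_apply_eq_sum (hJ : IsJordanBasis f x b) (i : ι) (p : K[X]) :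
    aeval f p (x i) = ∑ s : Fin (k i), p.coeff s • b ⟨i, s⟩ := by
  rw [aeval_eq_sum_range' (n := k i + (p.natDegree + 1)) (by omega), Finset.sum_range_add,
    Finset.sum_range, LinearMap.add_apply, LinearMap.sum_apply, LinearMap.sum_apply,
    Finset.sum_eq_zero (s := Finset.range _) fun n _ => by
      rw [LinearMap.smul_apply, hJ.pow_apply_eq_zero_of_le le_self_add, smul_zero], add_zero]
  simp [hJ.basis_apply]

end IsJordanBasis

variable [Fintype ι]

noncomputable def endOfMatrix (f : Module.End K V) (x : ι → V)
    (b : Module.Basis (Σ i, Fin (k i)) K V) : Matrix ι ι K[X] →ₗ[K] Module.End K V where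
  toFun P := b.constr K fun p => ∑ i, aeval f (X ^ (p.2 : ℕ) * P i p.1) (x i)
  map_add' P Q := b.ext fun p => by simp [mul_add, Finset.sum_add_distrib]
  map_smul' c P := b.ext fun p => by
    simp only [LinearMap.smul_apply, b.constr_basis]
    simp [Finset.smul_sum]

variable {f : Module.End K V} {x : ι → V} {b : Module.Basis (Σ i, Fin (k i)) K V}

theorem endOfMatrix_basis (P : Matrix ι ι K[X]) (p : Σ i, Fin (k i)) :
    endOfMatrix f x b P (b p) = ∑ i, aeval f (X ^ (p.2 : ℕ) * P i p.1) (x i) :=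
  b.constr_basis K _ p

namespace IsJordanBasis

theorem sum_aeval_apply_eq_zero_iff (hJ : IsJordanBasis f x b) (p : ι → K[X]) :
    ∑ i, aeval f (p i) (x i) = 0 ↔ ∀ i, X ^ k i ∣ p i := by
  simp_rw [hJ.aeval_apply_eq_sum, X_pow_dvd_iff]
  rw [← Fintype.sum_sigma fun q => (p q.1).coeff q.2 • b q]
  refine ⟨fun h i n hn => Fintype.linearIndependent_iff.1 b.linearIndependent _ h ⟨i, n, hn⟩,
    fun h => Finset.sum_eq_zero fun q _ => ?_⟩
  rw [h q.1 q.2 q.2.2, zero_smul]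

theorem exists_sum_aeval_apply_eq (hJ : IsJordanBasis f x b) (v : V) :
    ∃ p : ι → K[X], ∑ i, aeval f (p i) (x i) = v := by
  refine ⟨fun i => ∑ s : Fin (k i), C (b.repr v ⟨i, s⟩) * X ^ (s : ℕ), ?_⟩
  conv_rhs => rw [← b.sum_repr v, Fintype.sum_sigma]
  simp [hJ.basis_apply]

variable {P : Matrix ι ι K[X]}

theorem endOfMatrix_pow_apply (hJ : IsJordanBasis f x b) (hP : ∀ i j, X ^ (k i - k j) ∣ P i j)
    (j : ι) (n : ℕ) :
    endOfMatrix f x b P ((f ^ n) (x j)) = ∑ i, aeval f (X ^ n * P i j) (x i) := by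
  by_cases hn : n < k j
  · rw [← hJ.basis_apply ⟨j, n, hn⟩]
    exact endOfMatrix_basis P _
  · rw [hJ.pow_apply_eq_zero_of_le (not_lt.1 hn), map_zero]
    refine (Finset.sum_eq_zero fun i _ => hJ.aeval_apply_eq_zero_of_dvd ?_).symm
    calc X ^ k i ∣ X ^ n * X ^ (k i - k j) := by rw [← pow_add]; exact pow_dvd_pow _ (by omega)
      _ ∣ X ^ n * P i j := mul_dvd_mul_left _ (hP i j)

theorem endOfMatrix_aeval_apply (hJ : IsJordanBasis f x b)
    (hP : ∀ i j, X ^ (k i - k j) ∣ P i j) (j : ι) (q : K[X]) :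
    endOfMatrix f x b P (aeval f q (x j)) = ∑ i, aeval f (q * P i j) (x i) := by
  induction q using Polynomial.induction_on' with
  | add p q hp hq => simp [add_mul, hp, hq, Finset.sum_add_distrib]
  | monomial n c =>
    rw [← C_mul_X_pow_eq_monomial, ← smul_eq_C_mul]
    simp [hJ.endOfMatrix_pow_apply hP, Finset.smul_sum]

theorem commute_endOfMatrix (hJ : IsJordanBasis f x b) (hP : ∀ i j, X ^ (k i - k j) ∣ P i j) :
    Commute f (endOfMatrix f x b P) := by
  refine b.ext fun p => ?_
  rw [Module.End.mul_apply, Module.End.mul_apply, endOfMatrix_basis, hJ.basis_apply,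
    ← Module.End.mul_apply f, ← pow_succ', hJ.endOfMatrix_pow_apply hP, map_sum]
  simp_rw [aeval_X_pow_mul_apply, pow_succ', Module.End.mul_apply]

theorem endOfMatrix_mul (hJ : IsJordanBasis f x b) (hP : ∀ i j, X ^ (k i - k j) ∣ P i j)
    (Q : Matrix ι ι K[X]) :
    endOfMatrix f x b (P * Q) = endOfMatrix f x b P * endOfMatrix f x b Q :=
  b.ext fun p => by
    simp only [Module.End.mul_apply, endOfMatrix_basis, map_sum, hJ.endOfMatrix_aeval_apply hP,
      Matrix.mul_apply, Finset.mul_sum, LinearMap.sum_apply]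
    rw [Finset.sum_comm]
    exact Finset.sum_congr rfl fun t _ => Finset.sum_congr rfl fun i _ => by
      rw [mul_assoc, mul_comm (P i t)]

theorem endOfMatrix_one [DecidableEq ι] (hJ : IsJordanBasis f x b) :
    endOfMatrix f x b (1 : Matrix ι ι K[X]) = 1 :=
  b.ext fun p => by
    rw [endOfMatrix_basis,
      Finset.sum_eq_single p.1 (fun i _ hi => by simp [Matrix.one_apply_ne hi]) (by simp),
      Matrix.one_apply_eq, mul_one, map_pow, aeval_X, hJ.basis_apply, Module.End.one_apply]

theorem exists_endOfMatrix_eq (hJ : IsJordanBasis f x b) {g : Module.End K V}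
    (hg : Commute f g) :
    ∃ P : Matrix ι ι K[X], (∀ i j, X ^ (k i - k j) ∣ P i j) ∧
      endOfMatrix f x b P = g := by
  choose P hP using fun j => hJ.exists_sum_aeval_apply_eq (g (x j))
  have hpow : ∀ n j, ∑ i, aeval f (X ^ n * P j i) (x i) = g ((f ^ n) (x j)) := fun n j => by
    simp_rw [aeval_X_pow_mul_apply, ← map_sum, hP, ← Module.End.mul_apply, (hg.pow_left n).eq]
  refine ⟨(Matrix.of P).transpose, fun i j => X_pow_sub_dvd_of_X_pow_dvd_X_pow_mul ?_,
    b.ext fun p => ?_⟩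
  · refine (hJ.sum_aeval_apply_eq_zero_iff fun i => X ^ k j * P j i).1 ?_ i
    rw [hpow, hJ.pow_apply_self_eq_zero, map_zero]
  · rw [endOfMatrix_basis, hJ.basis_apply]
    exact hpow _ _

theorem endOfMatrix_eq_zero_iff (hJ : IsJordanBasis f x b)
    (hP : ∀ i j, X ^ (k i - k j) ∣ P i j) :
    endOfMatrix f x b P = 0 ↔ ∀ i j, X ^ k i ∣ P i j := by
  refine ⟨fun h i j => ?_, fun h => b.ext fun p => ?_⟩
  · have h0 := hJ.endOfMatrix_pow_apply hP j 0
    simp only [h, pow_zero, one_mul, LinearMap.zero_apply] at h0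
    exact (hJ.sum_aeval_apply_eq_zero_iff _).1 h0.symm i
  · rw [endOfMatrix_basis, LinearMap.zero_apply]
    exact Finset.sum_eq_zero fun i _ => hJ.aeval_apply_eq_zero_of_dvd ((h i p.1).mul_left _)

end IsJordanBasis

end JordanBasis

section NX

variable {K V : Type*} [Field K] [AddCommGroup V] [Module K V] {m : ℕ} {k : Fin m → ℕ}
  {f : Module.End K V} {x : Fin m → V} {b : Module.Basis (Σ i, Fin (k i)) K V}

noncomputable def IsJordanBasis.nxToEnd (hJ : IsJordanBasis f x b) :
    NX (K := K) k →ₐ[K] Module.End K V :=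
  AlgHom.ofLinearMap ((endOfMatrix f x b).comp (NX (K := K) k).val.toLinearMap)
    hJ.endOfMatrix_one fun P Q => hJ.endOfMatrix_mul P.2 Q

@[simp]
theorem IsJordanBasis.nxToEnd_apply (hJ : IsJordanBasis f x b) (P : NX (K := K) k) :
    hJ.nxToEnd P = endOfMatrix f x b P :=
  rfl

end NX

theorem stmt15_general {K : Type*} [Field K] {d m : ℕ} (A : Matrix (Fin d) (Fin d) K)
    (k : Fin m → ℕ)
    (x : Fin m → (Fin d → K))
    (hzero : ∀ γ, ((Matrix.toLin' A) ^ (k γ)) (x γ) = 0)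
    (b : Module.Basis ((γ : Fin m) × Fin (k γ)) K (Fin d → K))
    (hb : ∀ p : (γ : Fin m) × Fin (k γ), b p = ((Matrix.toLin' A) ^ ((p.2 : ℕ))) (x p.1)) :
    ∃ Θ : NX k →ₐ[K] Subalgebra.centralizer K ({A} : Set (Matrix (Fin d) (Fin d) K)),
      Function.Surjective Θ ∧
      ∀ P : NX k, Θ P = 0 ↔
        ∀ i j, (X : Polynomial K) ^ (k i) ∣ P.val i j := by
  have hJ : IsJordanBasis (Matrix.toLinAlgEquiv' A) x b := ⟨hzero, hb⟩
  let e := (Matrix.toLinAlgEquiv' (R := K) (n := Fin d)).symm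
  refine ⟨(e.toAlgHom.comp hJ.nxToEnd).codRestrict _ fun P => ?_, ?_, fun P => ?_⟩
  · rw [Subalgebra.mem_centralizer_iff]
    rintro _ rfl
    simpa [e] using ((hJ.commute_endOfMatrix P.2).map e).eq
  · rintro ⟨B, hB⟩
    obtain ⟨P, hP, hPB⟩ := hJ.exists_endOfMatrix_eq
      (Commute.map ((Subalgebra.mem_centralizer_iff K).1 hB A rfl) Matrix.toLinAlgEquiv')
    exact ⟨⟨P, hP⟩, Subtype.ext (by simp [e, hPB])⟩
  · rw [← hJ.endOfMatrix_eq_zero_iff P.2]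
    simp [Subtype.ext_iff, e]

theorem stmt15 {K : Type*} [Field K] {d m : ℕ} (A : Matrix (Fin d) (Fin d) K)
    (hA : IsNilpotent A) (k : Fin m → ℕ) (hk1 : ∀ i, 1 ≤ k i)
    (hmono : ∀ i j : Fin m, i ≤ j → k j ≤ k i)
    (x : Fin m → (Fin d → K))
    (hzero : ∀ γ, ((Matrix.toLin' A) ^ (k γ)) (x γ) = 0)
    (b : Module.Basis ((γ : Fin m) × Fin (k γ)) K (Fin d → K))
    (hb : ∀ p : (γ : Fin m) × Fin (k γ), b p = ((Matrix.toLin' A) ^ ((p.2 : ℕ))) (x p.1)) :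
    ∃ Θ : NX k →ₐ[K] Subalgebra.centralizer K ({A} : Set (Matrix (Fin d) (Fin d) K)),
      Function.Surjective Θ ∧
      ∀ P : NX k, Θ P = 0 ↔
        ∀ i j, (X : Polynomial K) ^ (k i) ∣ P.val i j :=
  stmt15_general A k x hzero b hb
end

section
/- Let A ∈ M_d(K) be a nilpotent matrix over a field K whose Jordan form has p_e blocks of size e for each e ≥ 1. Then Cen(A) modulo its Jacobson radical is isomorphic to the direct product of the matrix algebras M_{p_e}(K) over those e with p_e > 0. -/
/-!
Write `N` for the operator of `A` and `x γ` for the generators of its Jordan chains. An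
endomorphism `g` commuting with `N` is determined by the vectors `g (x γ)`, which can be any
vectors killed by `N ^ k γ`. The coefficient of `x δ` in `g (x γ)` (the head matrix of `g`) is
multiplicative in `g` and vanishes when `k γ < k δ`, so it is block triangular with respect to
chain length, and every block triangular matrix occurs. Taking its diagonal blocks is therefore a
surjective algebra map onto `∏ e, M_{p e}(K)`. Its kernel is nil: if all diagonal blocks vanish,
the head matrix is nilpotent, and an endomorphism with zero head matrix maps `V` into `N V`, so it
is nilpotent together with `N`. A surjection onto a semisimple ring with nil kernel has the
Jacobson radical as its kernel.
-/

open Matrix Module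

theorem Matrix.submatrix_mul_of_forall_mul_eq_zero {l m n o p q R : Type*} [Fintype n] [Fintype o]
    [NonUnitalNonAssocSemiring R] {M : Matrix m n R} {N : Matrix n p R}
    (e₁ : l → m) {e₂ : o → n} (e₃ : q → p) (he₂ : Function.Injective e₂)
    (h : ∀ i j c, c ∉ Set.range e₂ → M (e₁ i) c * N c (e₃ j) = 0) :
    (M * N).submatrix e₁ e₃ = M.submatrix e₁ e₂ * N.submatrix e₂ e₃ := by
  ext i j
  exact (Fintype.sum_of_injective e₂ he₂ _ _ (h i j) fun _ => rfl).symm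

theorem Matrix.BlockTriangular.toSquareBlock_mul {m α R : Type*} [Fintype m] [LinearOrder α]
    [NonUnitalNonAssocSemiring R] {M N : Matrix m m R} {b : m → α}
    (hM : M.BlockTriangular b) (hN : N.BlockTriangular b) (a : α) :
    (M * N).toSquareBlock b a = M.toSquareBlock b a * N.toSquareBlock b a :=
  submatrix_mul_of_forall_mul_eq_zero _ _ Subtype.val_injective fun i j c hc => by
    rcases (show b c ≠ a from fun h => hc ⟨⟨c, h⟩, rfl⟩).lt_or_gt with h | h
    · rw [hM (i.2.symm ▸ h), zero_mul]
    · rw [hN (j.2.symm ▸ h), mul_zero]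

theorem Matrix.isNilpotent_of_forall_le_imp_eq_zero {m R : Type*} [Fintype m] [DecidableEq m]
    [Semiring R] {M : Matrix m m R} {b : m → ℕ} (h : ∀ i j, b j ≤ b i → M i j = 0) :
    IsNilpotent M := by
  have key : ∀ n i j, b j < b i + n → (M ^ n) i j = 0 := by
    intro n
    induction n with
    | zero => intro i j hij; rw [pow_zero, one_apply_ne]; rintro rfl; omega
    | succ n ih =>
      intro i j hij
      rw [pow_succ', mul_apply]
      refine Finset.sum_eq_zero fun c _ => ?_
      rcases le_or_gt (b c) (b i) with hc | hc
      · rw [h i c hc, zero_mul]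
      · rw [ih c j (by omega), mul_zero]
  refine ⟨Finset.univ.sup b + 1, funext₂ fun i j => key _ i j ?_⟩
  have := Finset.le_sup (f := b) (Finset.mem_univ j)
  omega

section BlockTriangularToSquareBlocks

variable {m α : Type*} (R A : Type*) [Fintype m] [DecidableEq m] [LinearOrder α] [CommSemiring R]
  [Semiring A] [Algebra R A] (b : m → α) (P : α → Prop)

def Matrix.blockTriangularToSquareBlocks :
    blockTriangularSubalgebra R A b →ₐ[R]
      ((a : Subtype P) → Matrix {i // b i = a.1} {i // b i = a.1} A) where
  toFun M a := M.1.toSquareBlock b a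
  map_one' := by ext; simp [toSquareBlock_def, one_apply, Subtype.ext_iff]
  map_mul' M N := funext fun a => M.2.toSquareBlock_mul N.2 a
  map_zero' := rfl
  map_add' _ _ := rfl
  commutes' r := by ext; simp [toSquareBlock_def, algebraMap_matrix_apply, Subtype.ext_iff]

theorem Matrix.blockTriangularToSquareBlocks_surjective :
    Function.Surjective (blockTriangularToSquareBlocks R A b P) := by
  classical
  intro M
  let T : Matrix m m A := fun i j =>
    if h : b i = b j ∧ P (b j) then M ⟨b j, h.2⟩ ⟨i, h.1⟩ ⟨j, rfl⟩ else 0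
  refine ⟨⟨T, fun i j hij => dif_neg fun h => hij.ne' h.1⟩, funext fun ⟨a, ha⟩ => ?_⟩
  ext i ⟨j, hj⟩
  cases hj
  simp [blockTriangularToSquareBlocks, T, toSquareBlock_def, i.2, ha]

end BlockTriangularToSquareBlocks

theorem Matrix.isNilpotent_of_blockTriangularToSquareBlocks_eq_zero {m R A : Type*} [Fintype m]
    [DecidableEq m] [CommSemiring R] [Semiring A] [Algebra R A] {b : m → ℕ} {P : ℕ → Prop}
    (hP : ∀ i, P (b i)) {M : blockTriangularSubalgebra R A b}
    (hM : blockTriangularToSquareBlocks R A b P M = 0) : IsNilpotent M := by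
  refine (IsNilpotent.map_iff (f := (blockTriangularSubalgebra R A b).val)
    Subtype.val_injective).mp (isNilpotent_of_forall_le_imp_eq_zero (b := b) fun i j hij => ?_)
  rcases hij.lt_or_eq with h | h
  · exact M.2 h
  · exact congrFun (congrFun (congrFun hM ⟨b j, hP j⟩) ⟨i, h.symm⟩) ⟨j, rfl⟩

theorem RingHom.map_eq_zero_iff_mem_jacobson_of_surjective {R S : Type*} [Ring R] [Ring S]
    [IsSemisimpleRing S] {f : R →+* S} (hf : Function.Surjective f)
    (hnil : ∀ x, f x = 0 → IsNilpotent x) {x : R} : f x = 0 ↔ x ∈ Ideal.jacobson ⊥ := by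
  constructor
  · intro hx
    refine Ideal.mem_jacobson_iff.mpr fun y => ?_
    obtain ⟨u, hu⟩ := (hnil (y * x) (by rw [map_mul, hx, mul_zero])).isUnit_add_one
    refine ⟨↑u⁻¹, ?_⟩
    rw [Ideal.mem_bot, mul_assoc, ← mul_add_one, ← hu, Units.inv_mul, sub_self]
  · intro hx
    have : x ∈ Ideal.comap f (Ideal.jacobson ⊥) := by
      rw [Ideal.comap_jacobson_of_surjective hf]
      exact Ideal.jacobson_mono bot_le hx
    rwa [Ideal.mem_comap, Ideal.jacobson_bot, IsSemisimpleRing.jacobson_eq_bot, Ideal.mem_bot]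
      at this

theorem Subalgebra.map_centralizer {R A B : Type*} [CommSemiring R] [Semiring A] [Semiring B]
    [Algebra R A] [Algebra R B] (e : A ≃ₐ[R] B) (s : Set A) :
    (centralizer R s).map (e : A →ₐ[R] B) = centralizer R (e '' s) := by
  ext y
  simp only [mem_map, mem_centralizer_iff, Set.forall_mem_image]
  constructor
  · rintro ⟨z, hz, rfl⟩ a ha
    simp [← map_mul, hz a ha]
  · intro hy
    refine ⟨e.symm y, fun a ha => e.injective ?_, by simp⟩
    simp [map_mul, hy ha]

theorem Module.End.isNilpotent_of_range_le_range {R M : Type*} [Semiring R] [AddCommMonoid M]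
    [Module R M] {N g : Module.End R M} (hN : IsNilpotent N) (hc : Commute N g)
    (h : LinearMap.range g ≤ LinearMap.range N) : IsNilpotent g := by
  have key : ∀ n, LinearMap.range (g ^ n) ≤ LinearMap.range (N ^ n) := by
    intro n
    induction n with
    | zero => simp
    | succ n ih =>
      rintro _ ⟨v, rfl⟩
      obtain ⟨w, hw⟩ := ih ⟨v, rfl⟩
      obtain ⟨u, hu⟩ := h ⟨w, rfl⟩
      refine ⟨u, ?_⟩
      calc (N ^ (n + 1)) u = (N ^ n) (g w) := by rw [pow_succ, End.mul_apply, hu]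
        _ = g ((N ^ n) w) := LinearMap.congr_fun (hc.pow_left n).eq w
        _ = (g ^ (n + 1)) v := by rw [hw, pow_succ', End.mul_apply]
  obtain ⟨s, hs⟩ := hN
  refine ⟨s, LinearMap.range_eq_bot.mp (le_bot_iff.mp ?_)⟩
  simpa [hs] using key s

theorem Subalgebra.mem_centralizer_singleton_iff {R A : Type*} [CommSemiring R] [Semiring A]
    [Algebra R A] {a z : A} : z ∈ centralizer R {a} ↔ Commute a z := by
  simp [mem_centralizer_iff, commute_iff_eq]

theorem Sigma.fin_mk_eq_mk_iff {ι : Type*} {k : ι → ℕ} {γ δ : ι} {i : Fin (k γ)} {j : Fin (k δ)} :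
    (⟨γ, i⟩ : Σ γ, Fin (k γ)) = ⟨δ, j⟩ ↔ γ = δ ∧ (i : ℕ) = j := by
  constructor
  · rintro ⟨⟩
    exact ⟨rfl, rfl⟩
  · rintro ⟨rfl, h⟩
    rw [Fin.ext h]

noncomputable section

variable {K V ι : Type*} [CommRing K] [AddCommGroup V] [Module K V] {k : ι → ℕ}

structure IsJordanChainBasis_s16 (N : Module.End K V) (x : ι → V) (b : Basis (Σ γ, Fin (k γ)) K V) :
    Prop where
  pow_apply_eq_zero : ∀ γ, (N ^ k γ) (x γ) = 0
  eq_pow_apply : ∀ q, b q = (N ^ (q.2 : ℕ)) (x q.1)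

def chainHead (hk : ∀ γ, 0 < k γ) (γ : ι) : Σ γ, Fin (k γ) := ⟨γ, ⟨0, hk γ⟩⟩

theorem chainHead_injective (hk : ∀ γ, 0 < k γ) : Function.Injective (chainHead hk) :=
  fun _ _ h => congrArg Sigma.fst h

/-- Entry `(δ, γ)` is the coefficient of `x δ` in `g (x γ)`. -/
def headMatrix [Fintype ι] [DecidableEq ι] (b : Basis (Σ γ, Fin (k γ)) K V) (hk : ∀ γ, 0 < k γ)
    (g : Module.End K V) : Matrix ι ι K :=
  (LinearMap.toMatrix b b g).submatrix (chainHead hk) (chainHead hk)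

theorem headMatrix_one [Fintype ι] [DecidableEq ι] (b : Basis (Σ γ, Fin (k γ)) K V)
    (hk : ∀ γ, 0 < k γ) : headMatrix b hk 1 = 1 := by
  rw [headMatrix, LinearMap.toMatrix_one, Matrix.submatrix_one _ (chainHead_injective hk)]

namespace IsJordanChainBasis_s16

variable {N : Module.End K V} {x : ι → V} {b : Basis (Σ γ, Fin (k γ)) K V}
  (hJ : IsJordanChainBasis_s16 N x b)
include hJ

theorem pow_apply (γ : ι) (n : ℕ) :
    (N ^ n) (x γ) = if h : n < k γ then b ⟨γ, ⟨n, h⟩⟩ else 0 := by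
  split_ifs with h
  · exact (hJ.eq_pow_apply ⟨γ, ⟨n, h⟩⟩).symm
  · rw [← Nat.sub_add_cancel (not_lt.mp h), pow_add, End.mul_apply, hJ.pow_apply_eq_zero, map_zero]

theorem pow_apply_basis (γ : ι) (i : Fin (k γ)) (n : ℕ) :
    (N ^ n) (b ⟨γ, i⟩) = if h : n + i < k γ then b ⟨γ, ⟨n + i, h⟩⟩ else 0 := by
  rw [hJ.eq_pow_apply, ← End.mul_apply, ← pow_add, hJ.pow_apply]

theorem basis_chainHead (hk : ∀ γ, 0 < k γ) (γ : ι) : b (chainHead hk γ) = x γ := by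
  rw [hJ.eq_pow_apply]
  rfl

theorem repr_pow_apply_chainHead (hk : ∀ γ, 0 < k γ) {n : ℕ} (hn : 0 < n) (δ : ι) (w : V) :
    b.repr ((N ^ n) w) (chainHead hk δ) = 0 := by
  suffices b.coord (chainHead hk δ) ∘ₗ N ^ n = 0 from LinearMap.congr_fun this w
  refine b.ext fun ⟨γ, i⟩ => ?_
  rw [LinearMap.comp_apply, hJ.pow_apply_basis, LinearMap.zero_apply]
  split_ifs
  · rw [Basis.coord_apply, Basis.repr_self, Finsupp.single_eq_of_ne]
    simp only [chainHead, Ne, Sigma.fin_mk_eq_mk_iff]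
    omega
  · exact map_zero _

theorem repr_pow_apply_of_lt {n : ℕ} {δ : ι} (hn : n < k δ) (w : V) :
    b.repr ((N ^ n) w) ⟨δ, ⟨n, hn⟩⟩ = b.repr w ⟨δ, ⟨0, by omega⟩⟩ := by
  classical
  suffices b.coord ⟨δ, ⟨n, hn⟩⟩ ∘ₗ N ^ n = b.coord ⟨δ, ⟨0, by omega⟩⟩ from
    LinearMap.congr_fun this w
  refine b.ext fun ⟨γ, i⟩ => ?_
  rw [LinearMap.comp_apply, hJ.pow_apply_basis]
  split_ifs
  · simp only [Basis.coord_apply, Basis.repr_self, Finsupp.single_apply, Sigma.fin_mk_eq_mk_iff]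
    grind
  · simp only [map_zero, Basis.coord_apply, Basis.repr_self, Finsupp.single_apply,
      Sigma.fin_mk_eq_mk_iff]
    grind

theorem exists_commute_apply_eq (y : ι → V) (hy : ∀ γ, (N ^ k γ) (y γ) = 0) :
    ∃ g : Module.End K V, Commute N g ∧ ∀ γ, g (x γ) = y γ := by
  have hy' : ∀ γ n, k γ ≤ n → (N ^ n) (y γ) = 0 := fun γ n h => by
    rw [← Nat.sub_add_cancel h, pow_add, End.mul_apply, hy, map_zero]
  refine ⟨b.constr K fun q => (N ^ (q.2 : ℕ)) (y q.1), b.ext fun ⟨γ, i⟩ => ?_, fun γ => ?_⟩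
  · have hN := hJ.pow_apply_basis γ i 1
    rw [pow_one] at hN
    rw [End.mul_apply, End.mul_apply, Basis.constr_basis, hN]
    split_ifs with h
    · rw [Basis.constr_basis, pow_add, pow_one]
      rfl
    · dsimp only
      rw [map_zero, ← End.mul_apply, ← pow_succ', hy' γ _ (by omega)]
  · have hx := hJ.pow_apply γ 0
    rw [pow_zero, End.one_apply] at hx
    rw [hx]
    split_ifs with h
    · rw [Basis.constr_basis, pow_zero, End.one_apply]
    · rw [map_zero, ← hy' γ 0 (by omega), pow_zero, End.one_apply]

section headMatrix

variable (hk : ∀ γ, 0 < k γ) [Fintype ι]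

theorem mem_range_of_repr_chainHead_eq_zero {v : V} (hv : ∀ δ, b.repr v (chainHead hk δ) = 0) :
    v ∈ LinearMap.range N := by
  rw [← b.sum_repr v]
  refine Submodule.sum_mem _ fun ⟨γ, ⟨i, hi⟩⟩ _ => ?_
  cases i with
  | zero => rw [show b.repr v ⟨γ, ⟨0, hi⟩⟩ = 0 from hv γ, zero_smul]; exact Submodule.zero_mem _
  | succ i =>
    refine Submodule.smul_mem _ _ ⟨(N ^ i) (x γ), ?_⟩
    rw [hJ.eq_pow_apply, ← End.mul_apply, ← pow_succ']

variable [DecidableEq ι] {g : Module.End K V}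

theorem toMatrix_chainHead_apply (hc : Commute N g) (δ : ι) {q : Σ γ, Fin (k γ)}
    (hq : 0 < (q.2 : ℕ)) : LinearMap.toMatrix b b g (chainHead hk δ) q = 0 := by
  rw [LinearMap.toMatrix_apply, hJ.eq_pow_apply, ← End.mul_apply, ← (hc.pow_left _).eq,
    End.mul_apply, hJ.repr_pow_apply_chainHead hk hq]

theorem headMatrix_mul (hc : Commute N g) (g' : Module.End K V) :
    headMatrix b hk (g * g') = headMatrix b hk g * headMatrix b hk g' := by
  rw [headMatrix, LinearMap.toMatrix_mul,
    Matrix.submatrix_mul_of_forall_mul_eq_zero _ _ (chainHead_injective hk)]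
  · rfl
  rintro δ - ⟨γ, i⟩ hq
  have hi : 0 < (i : ℕ) := Nat.pos_of_ne_zero fun h => hq ⟨γ, by simp [chainHead, Fin.ext_iff, h]⟩
  rw [hJ.toMatrix_chainHead_apply hk hc δ hi, zero_mul]

theorem blockTriangular_headMatrix (hc : Commute N g) : (headMatrix b hk g).BlockTriangular k := by
  intro δ γ h
  have hzero : (N ^ k γ) (g (x γ)) = 0 := by
    rw [← End.mul_apply, (hc.pow_left _).eq, End.mul_apply, hJ.pow_apply_eq_zero, map_zero]
  have := hJ.repr_pow_apply_of_lt h (g (x γ))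
  rw [hzero, map_zero, Finsupp.zero_apply] at this
  rw [headMatrix, Matrix.submatrix_apply, LinearMap.toMatrix_apply, hJ.basis_chainHead]
  exact this.symm

theorem exists_commute_headMatrix_eq {T : Matrix ι ι K} (hT : T.BlockTriangular k) :
    ∃ g : Module.End K V, Commute N g ∧ headMatrix b hk g = T := by
  obtain ⟨g, hc, hg⟩ := hJ.exists_commute_apply_eq (fun γ => ∑ δ, T δ γ • x δ) fun γ => by
    rw [map_sum]
    refine Finset.sum_eq_zero fun δ _ => ?_
    rw [map_smul, hJ.pow_apply]
    split_ifs with h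
    · rw [hT h, zero_smul]
    · rw [smul_zero]
  refine ⟨g, hc, Matrix.ext fun δ γ => ?_⟩
  rw [headMatrix, Matrix.submatrix_apply, LinearMap.toMatrix_apply, hJ.basis_chainHead, hg]
  simp_rw [← hJ.basis_chainHead hk]
  simp [Finsupp.single_apply, (chainHead_injective hk).eq_iff]

theorem range_le_range_of_headMatrix_eq_zero (hc : Commute N g) (h : headMatrix b hk g = 0) :
    LinearMap.range g ≤ LinearMap.range N := by
  rintro _ ⟨v, rfl⟩
  refine hJ.mem_range_of_repr_chainHead_eq_zero hk fun δ => ?_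
  rw [← LinearMap.toMatrix_mulVec_repr b b]
  refine Finset.sum_eq_zero fun ⟨γ, ⟨i, hi⟩⟩ _ => ?_
  show LinearMap.toMatrix b b g (chainHead hk δ) ⟨γ, ⟨i, hi⟩⟩ * _ = 0
  cases i with
  | zero => rw [show LinearMap.toMatrix b b g (chainHead hk δ) ⟨γ, ⟨0, hi⟩⟩ = 0 from
      congrFun (congrFun h δ) γ, zero_mul]
  | succ i =>
    rw [hJ.toMatrix_chainHead_apply hk hc δ (q := ⟨γ, ⟨i + 1, hi⟩⟩) (Nat.succ_pos i), zero_mul]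

def headHom : Subalgebra.centralizer K {N} →ₐ[K] blockTriangularSubalgebra K K k :=
  AlgHom.codRestrict
    (AlgHom.ofLinearMap
      { toFun := fun g : Subalgebra.centralizer K {N} => headMatrix b hk g
        map_add' := fun g g' => by simp [headMatrix, Matrix.submatrix_add]
        map_smul' := fun c g => by simp [headMatrix, Matrix.submatrix_smul] }
      (headMatrix_one b hk)
      fun g g' => hJ.headMatrix_mul hk (Subalgebra.mem_centralizer_singleton_iff.mp g.2) g')
    _ fun g => hJ.blockTriangular_headMatrix hk (Subalgebra.mem_centralizer_singleton_iff.mp g.2)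

theorem headHom_surjective : Function.Surjective (hJ.headHom hk) := fun T => by
  obtain ⟨g, hc, hg⟩ := hJ.exists_commute_headMatrix_eq hk T.2
  exact ⟨⟨g, Subalgebra.mem_centralizer_singleton_iff.mpr hc⟩, Subtype.ext hg⟩

theorem isNilpotent_of_isNilpotent_headHom (hN : IsNilpotent N) {g : Subalgebra.centralizer K {N}}
    (h : IsNilpotent (hJ.headHom hk g)) : IsNilpotent g := by
  obtain ⟨n, hn⟩ := h
  rw [← map_pow] at hn
  have hc := Subalgebra.mem_centralizer_singleton_iff.mp (g ^ n).2
  have hrange := hJ.range_le_range_of_headMatrix_eq_zero hk hc (congrArg Subtype.val hn)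
  exact ((IsNilpotent.map_iff (f := (Subalgebra.centralizer K {N}).val)
    Subtype.val_injective).mp (End.isNilpotent_of_range_le_range hN hc hrange)).of_pow

end headMatrix

end IsJordanChainBasis_s16

end

theorem stmt16 {K : Type*} [Field K] {d : ℕ} (A : Matrix (Fin d) (Fin d) K)
    (hA : IsNilpotent A) {m : ℕ} (k : Fin m → ℕ) (hk1 : ∀ γ, 1 ≤ k γ)
    (x : Fin m → (Fin d → K))
    (hzero : ∀ γ, ((Matrix.toLin' A) ^ (k γ)) (x γ) = 0)
    (b : Module.Basis ((γ : Fin m) × Fin (k γ)) K (Fin d → K))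
    (hb : ∀ p : (γ : Fin m) × Fin (k γ), b p = ((Matrix.toLin' A) ^ ((p.2 : ℕ))) (x p.1))
    (p : ℕ → ℕ)
    (hp : ∀ e, p e = (Finset.univ.filter (fun γ : Fin m => k γ = e)).card) :
    ∃ f : Subalgebra.centralizer K ({A} : Set (Matrix (Fin d) (Fin d) K)) →ₐ[K]
        ((e : {e : ℕ // 0 < p e}) → Matrix (Fin (p e)) (Fin (p e)) K),
      Function.Surjective f ∧
      ∀ y : Subalgebra.centralizer K ({A} : Set (Matrix (Fin d) (Fin d) K)),
        f y = 0 ↔ y ∈ Ideal.jacobson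
          (⊥ : Ideal (Subalgebra.centralizer K ({A} : Set (Matrix (Fin d) (Fin d) K)))) := by
  have hJ : IsJordanChainBasis_s16 (Matrix.toLin' A) x b := ⟨hzero, hb⟩
  have hpos : ∀ e, 0 < p e ↔ ∃ γ, k γ = e := fun e => by
    simp [hp, Finset.card_pos, Finset.filter_nonempty_iff]
  have : Finite {e // 0 < p e} := Finite.of_surjective (fun γ => ⟨k γ, (hpos _).mpr ⟨γ, rfl⟩⟩)
    fun ⟨e, he⟩ => by obtain ⟨γ, rfl⟩ := (hpos e).mp he; exact ⟨γ, rfl⟩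
  let τ : Subalgebra.centralizer K {A} ≃ₐ[K] Subalgebra.centralizer K {Matrix.toLin' A} :=
    (Matrix.toLinAlgEquiv'.subalgebraMap _).trans (Subalgebra.equivOfEq _ _
      ((Subalgebra.map_centralizer _ _).trans (by rw [Set.image_singleton]; rfl)))
  let σ (e : {e // 0 < p e}) : {γ // k γ = e.1} ≃ Fin (p e) :=
    Fintype.equivFinOfCardEq (by rw [Fintype.card_subtype, hp])
  let ρ := AlgEquiv.piCongrRight fun e => reindexAlgEquiv K K (σ e)
  let f := ρ.toAlgHom.comp
    ((blockTriangularToSquareBlocks K K k (0 < p ·)).comp ((hJ.headHom hk1).comp τ.toAlgHom))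
  have hf : Function.Surjective f := ρ.surjective.comp
    ((blockTriangularToSquareBlocks_surjective K K k _).comp
      ((hJ.headHom_surjective hk1).comp τ.surjective))
  refine ⟨f, hf, fun y => RingHom.map_eq_zero_iff_mem_jacobson_of_surjective (f := f.toRingHom) hf
    fun y hy => ?_⟩
  rw [← IsNilpotent.map_iff τ.injective]
  refine hJ.isNilpotent_of_isNilpotent_headHom hk1 (hA.map Matrix.toLinAlgEquiv') ?_
  refine isNilpotent_of_blockTriangularToSquareBlocks_eq_zero (P := (0 < p ·))
    (fun γ => (hpos _).mpr ⟨γ, rfl⟩) ?_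
  exact (map_eq_zero_iff _ ρ.injective).mp hy
end
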